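/- arXiv:1608.05659 — 6 statements merged into one kernel-verified Lean document; each statement's English description precedes it below -/
import Mathlib

section
/- If m·k is odd and n ≥ 2, then Pf_m(M) = 0 for every tensor M with mk indices each ranging over {1,...,mn}. -/
open Equiv Finset Function

/-- The `r`-th element of the `i`-th block of length `m` in `{0, …, m*n-1}`. -/
def idx (m n : ℕ) (i : Fin n) (r : Fin m) : Fin (m * n) :=
  ⟨i.val * m + r.val, by
    have h1 : i.val * m + m = (i.val + 1) * m := by ring
    have h2 : (i.val + 1) * m ≤ n * m := Nat.mul_le_mul_right m i.isLt
    have h3 : n * m = m * n := Nat.mul_comm n m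
    omega⟩

/-- A permutation of `{0, …, m*n-1}` is block-increasing if it is strictly increasing on
each of the `n` consecutive blocks of length `m`. -/
def BlockIncr (m n : ℕ) (σ : Equiv.Perm (Fin (m * n))) : Prop :=
  ∀ (i : Fin n) (r r' : Fin m), r < r' → σ (idx m n i r) < σ (idx m n i r')

instance (m n : ℕ) : DecidablePred (BlockIncr m n) := fun σ => by
  unfold BlockIncr; infer_instance

/-- The generalized pfaffian `Pf_m` of a tensor with `m*k` indices (grouped in `k` groups of
`m`), each ranging over `{0, …, m*n-1}`:
`(1/n!) Σ ε(σ_1)⋯ε(σ_k) Π_{i=1}^n M_{σ_1((i-1)m+1),…,σ_1(im),…,σ_k((i-1)m+1),…,σ_k(im)}`,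
the sum being over `k`-tuples of block-increasing permutations. -/
noncomputable def Pf (m k n : ℕ) (M : (Fin k → Fin m → Fin (m * n)) → ℚ) : ℚ :=
  (n.factorial : ℚ)⁻¹ *
    ∑ σ ∈ Finset.univ.filter (fun σ : Fin k → Equiv.Perm (Fin (m * n)) =>
        ∀ j, BlockIncr m n (σ j)),
      (∏ j, ((Equiv.Perm.sign (σ j) : ℤ) : ℚ)) *
        ∏ i : Fin n, M (fun j r => σ j (idx m n i r))

section Aux

variable (m n : ℕ)

/-- The equivalence `Fin n × Fin m ≃ Fin (m * n)` matching `idx`. -/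
def blockEquiv : Fin n × Fin m ≃ Fin (m * n) :=
  finProdFinEquiv.trans (finCongr (Nat.mul_comm n m))

theorem blockEquiv_apply (i : Fin n) (r : Fin m) :
    blockEquiv m n (i, r) = idx m n i r := by
  apply Fin.ext
  simp [blockEquiv, idx, finProdFinEquiv]
  ring

/-- The permutation of `Fin (m*n)` that swaps blocks according to `s : Perm (Fin n)`. -/
def blockPerm (s : Equiv.Perm (Fin n)) : Equiv.Perm (Fin (m * n)) :=
  (blockEquiv m n).permCongr (Equiv.prodCongrLeft fun _ : Fin m => s)

theorem blockPerm_idx (s : Equiv.Perm (Fin n)) (i : Fin n) (r : Fin m) :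
    blockPerm m n s (idx m n i r) = idx m n (s i) r := by
  rw [← blockEquiv_apply, ← blockEquiv_apply]
  simp [blockPerm, Equiv.permCongr_apply, Equiv.prodCongrLeft]

theorem sign_blockPerm (s : Equiv.Perm (Fin n)) :
    Equiv.Perm.sign (blockPerm m n s) = (Equiv.Perm.sign s) ^ m := by
  rw [blockPerm, Equiv.Perm.sign_permCongr, Equiv.Perm.sign_prodCongrLeft]
  simp

end Aux

/-- If `m * k` is odd and there are at least two blocks (`n ≥ 2`), the generalized
pfaffian vanishes identically. -/
theorem pf_eq_zero_of_odd (m k n : ℕ) (hodd : Odd (m * k)) (hn : 2 ≤ n)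
    (M : (Fin k → Fin m → Fin (m * n)) → ℚ) :
    Pf m k n M = 0 := by
  have hm : Odd m := (Nat.odd_mul.mp hodd).1
  have hk : Odd k := (Nat.odd_mul.mp hodd).2
  have hm1 : 1 ≤ m := hm.pos
  have hk1 : 1 ≤ k := hk.pos
  -- the two block indices to swap
  set a : Fin n := ⟨0, by omega⟩ with ha
  set b : Fin n := ⟨1, by omega⟩ with hb
  have hab : a ≠ b := by simp [ha, hb, Fin.ext_iff]
  set s : Equiv.Perm (Fin n) := Equiv.swap a b with hs
  set τ : Equiv.Perm (Fin (m * n)) := blockPerm m n s with hτ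
  have hsignτ : Equiv.Perm.sign τ = -1 := by
    rw [hτ, sign_blockPerm, hs, Equiv.Perm.sign_swap hab, hm.neg_one_pow]
  have hτidx : ∀ (i : Fin n) (r : Fin m), τ (idx m n i r) = idx m n (s i) r :=
    fun i r => blockPerm_idx m n s i r
  have hτne : τ ≠ 1 := by
    intro h
    have h2 := hτidx a ⟨0, by omega⟩
    rw [h] at h2
    simp only [Equiv.Perm.one_apply] at h2
    rw [hs, Equiv.swap_apply_left] at h2
    have := congrArg Fin.val h2
    simp [idx, ha, hb] at this
    omega
  rw [Pf]
  rw [show (0 : ℚ) = (n.factorial : ℚ)⁻¹ * 0 by ring]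
  congr 1
  refine Finset.sum_involution (fun σ _ => fun j => σ j * τ) ?_ ?_ ?_ ?_
  · -- summands cancel
    intro σ hσ
    have hsign : (∏ j, ((Equiv.Perm.sign (σ j * τ) : ℤ) : ℚ))
        = -(∏ j, ((Equiv.Perm.sign (σ j) : ℤ) : ℚ)) := by
      have : ∀ j : Fin k, ((Equiv.Perm.sign (σ j * τ) : ℤ) : ℚ)
          = ((Equiv.Perm.sign (σ j) : ℤ) : ℚ) * (-1) := by
        intro j
        rw [map_mul, hsignτ]
        push_cast
        ring
      rw [Finset.prod_congr rfl fun j _ => this j, Finset.prod_mul_distrib,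
        Finset.prod_const, Finset.card_univ, Fintype.card_fin, hk.neg_one_pow]
      ring
    have hprod : (∏ i : Fin n, M fun j r => (σ j * τ) (idx m n i r))
        = ∏ i : Fin n, M fun j r => σ j (idx m n i r) := by
      have h1 : (∏ i : Fin n, M fun j r => (σ j * τ) (idx m n i r))
          = ∏ i : Fin n, M fun j r => σ j (idx m n (s i) r) := by
        apply Finset.prod_congr rfl
        intro i _
        congr 1
        funext j r
        rw [Equiv.Perm.mul_apply, hτidx]
      rw [h1]
      exact Equiv.prod_comp s fun i => M fun j r => σ j (idx m n i r)
    rw [hsign, hprod]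
    ring
  · -- the involution has no fixed point
    intro σ hσ _
    intro h
    apply hτne
    have h' := congrFun h ⟨0, by omega⟩
    exact mul_left_cancel (h'.trans (mul_one (σ ⟨0, by omega⟩)).symm)
  · -- the involution preserves block-increasingness
    intro σ hσ
    simp only [Finset.mem_filter, Finset.mem_univ, true_and] at hσ ⊢
    intro j i r r' hrr'
    have : ∀ r : Fin m, (σ j * τ) (idx m n i r) = σ j (idx m n (s i) r) := by
      intro r
      rw [Equiv.Perm.mul_apply, hτidx]
    rw [this r, this r']
    exact hσ j (s i) r r' hrr'
  · -- it is an involution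
    intro σ hσ
    funext j
    have hττ : τ * τ = 1 := by
      ext x
      obtain ⟨⟨i, r⟩, rfl⟩ := (blockEquiv m n).surjective x
      rw [blockEquiv_apply]
      simp only [Equiv.Perm.mul_apply, hτidx, Equiv.Perm.one_apply, hs]
      rw [Equiv.swap_apply_self]
    calc σ j * τ * τ = σ j * (τ * τ) := by group
    _ = σ j := by rw [hττ]; group
end

section
/- Sum formula for generalized pfaffians: for tensors M and N of the same format, Pf_m(M + N) = Σ_{ℓ=0}^{n} Σ (−1)^{⟦I⟧} Pf_m(M[I]) · Pf_m(N[J]), where the inner sum runs over pairs I, J of sequences of index sets with card(I^(s)) = ℓm and J^(s) = {1,...,nm} \ I^(s) for all 1 ≤ s ≤ k. -/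
open Equiv Finset Function

/-- The block number of position `t` in `{0, …, m*n-1}`. -/
def blkOf (m n : ℕ) (t : Fin (m * n)) : Fin n :=
  ⟨t.val / m, Nat.div_lt_of_lt_mul t.isLt⟩

/-- The position within its block of position `t` in `{0, …, m*n-1}`. -/
def posOf (m n : ℕ) (t : Fin (m * n)) : Fin m :=
  ⟨t.val % m, by
    have hm : 0 < m := by
      rcases Nat.eq_zero_or_pos m with h | h
      · exact absurd t.isLt (by simp [h])
      · exact h
    exact Nat.mod_lt _ hm⟩

/-- The Levi-Civita (fully antisymmetric) tensor of order `m*k` and side `m*k`, with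
indices grouped in `k` groups of `m`: its value is the sign of the sequence of indices
read as a permutation when the indices are pairwise distinct, and `0` otherwise. -/
noncomputable def levi (m k : ℕ) : (Fin k → Fin m → Fin (m * k)) → ℚ := fun f =>
  if h : Function.Bijective (fun t : Fin (m * k) => f (blkOf m k t) (posOf m k t)) then
    ((Equiv.Perm.sign (Equiv.ofBijective _ h) : ℤ) : ℚ)
  else 0

/-- The hyperminor of `M` obtained by restricting the `s`-th group of `m` index slots to
the subset `I s` (of cardinality `m*ℓ`), with the induced order. -/
noncomputable def hyperminor {m k n : ℕ} (ℓ : ℕ) (M : (Fin k → Fin m → Fin (m * n)) → ℚ)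
    (I : Fin k → Finset (Fin (m * n))) (h : ∀ s, (I s).card = m * ℓ) :
    (Fin k → Fin m → Fin (m * ℓ)) → ℚ :=
  fun f => M fun j r => (((I j).orderIsoOfFin (h j)) (f j r)).1

/-- Row `ℓ` of the `(m,k)`-array built from column permutations `σ`: the entry in
column-group `j`, position `r` is `σ j ((ℓ-1)m + r)`. -/
def lqRow (m k : ℕ) (σ : Fin k → Equiv.Perm (Fin (m * k))) (ℓ : Fin k) :
    Fin (m * k) → Fin (m * k) :=
  fun t => σ (blkOf m k t) (idx m k ℓ (posOf m k t))

/-- `σ` determines an `(m,k)`-latin quasisquare: every column permutation `σ j` is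
block-increasing and every row is a permutation of `{0, …, mk-1}` (each row is then
automatically block-increasing). -/
def IsLQ (m k : ℕ) (σ : Fin k → Equiv.Perm (Fin (m * k))) : Prop :=
  (∀ j, BlockIncr m k (σ j)) ∧ ∀ ℓ : Fin k, Function.Bijective (lqRow m k σ ℓ)

instance (m k : ℕ) : DecidablePred (IsLQ m k) := fun σ => by
  unfold IsLQ lqRow; infer_instance

/-- The set of `(m,k)`-latin quasisquares. -/
noncomputable def LQ (m k : ℕ) : Finset (Fin k → Equiv.Perm (Fin (m * k))) :=
  Finset.univ.filter (IsLQ m k)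

/-- The sign of an `(m,k)`-latin quasisquare: the product of the signs of the column
permutations `σ j` and of the signs of the rows. -/
noncomputable def LQsign (m k : ℕ) (σ : Fin k → Equiv.Perm (Fin (m * k))) : ℚ :=
  if h : ∀ ℓ : Fin k, Function.Bijective (lqRow m k σ ℓ) then
    (∏ j, ((Equiv.Perm.sign (σ j) : ℤ) : ℚ)) *
      ∏ ℓ, ((Equiv.Perm.sign (Equiv.ofBijective _ (h ℓ)) : ℤ) : ℚ)
  else 0

namespace PfAux

variable {N : ℕ}

noncomputable def shuffle (A : Finset (Fin N)) : Equiv.Perm (Fin N) :=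
  ((finCongr (by simp [A.card_add_card_compl] : N = A.card + Aᶜ.card)).trans
      finSumFinEquiv.symm).trans <|
    (Equiv.sumCongr (A.orderIsoOfFin rfl).toEquiv
      ((Aᶜ.orderIsoOfFin rfl).toEquiv.trans
        (Equiv.subtypeEquivRight fun _ => Finset.mem_compl))).trans
      (Equiv.sumCompl (· ∈ A))

lemma card_compl_eq (A : Finset (Fin N)) : Aᶜ.card = N - A.card := by
  have := A.card_add_card_compl
  simp only [Fintype.card_fin] at this; omega

lemma shuffle_apply_lt (A : Finset (Fin N)) (t : Fin N) (h : t.val < A.card) :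
    shuffle A t = A.orderEmbOfFin rfl ⟨t.val, h⟩ := by
  simp only [shuffle, Equiv.trans_apply, finCongr_apply]
  rw [show (Fin.cast (by simp [A.card_add_card_compl] : N = A.card + Aᶜ.card) t)
      = Fin.castAdd Aᶜ.card ⟨t.val, h⟩ by ext; simp]
  rw [finSumFinEquiv_symm_apply_castAdd]
  simp [Finset.orderEmbOfFin, Finset.orderIsoOfFin]

lemma shuffle_apply_ge (A : Finset (Fin N)) (t : Fin N) (h : A.card ≤ t.val) :
    shuffle A t = Aᶜ.orderEmbOfFin rfl ⟨t.val - A.card, by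
      have := card_compl_eq A; omega⟩ := by
  simp only [shuffle, Equiv.trans_apply, finCongr_apply]
  rw [show (Fin.cast (by simp [A.card_add_card_compl] : N = A.card + Aᶜ.card) t)
      = Fin.natAdd A.card ⟨t.val - A.card, by have := card_compl_eq A; omega⟩ by
        ext; simp; omega]
  rw [finSumFinEquiv_symm_apply_natAdd]
  simp [Finset.orderEmbOfFin, Finset.orderIsoOfFin, Equiv.sumCompl]

lemma orderEmb_comp_mono {A' A : Finset (Fin N)} (hc : A'.card = A.card)
    (sw : Equiv.Perm (Fin N)) (hmem : ∀ x ∈ A', sw x ∈ A)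
    (hmono : ∀ x ∈ A', ∀ y ∈ A', x < y → sw x < sw y) (i : Fin A.card) :
    sw (A'.orderEmbOfFin hc i) = A.orderEmbOfFin rfl i := by
  have h := Finset.orderEmbOfFin_unique (s := A) rfl
    (f := fun i : Fin A.card => sw (A'.orderEmbOfFin hc i))
    (fun i => hmem _ (Finset.orderEmbOfFin_mem _ _ _))
    (fun i j hij => hmono _ (Finset.orderEmbOfFin_mem _ _ _) _
      (Finset.orderEmbOfFin_mem _ _ _) ((A'.orderEmbOfFin hc).strictMono hij))
  exact congrFun h i

lemma shuffle_step (A : Finset (Fin N)) (e e' : Fin N) (he : e ∈ A)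
    (he' : e'.val + 1 = e.val) (hne : e' ∉ A) :
    shuffle A = Equiv.swap e' e * shuffle (insert e' (A.erase e)) := by
  set A' := insert e' (A.erase e) with hA'
  have hee : e' ≠ e := fun h => by rw [h] at he'; omega
  have he'A' : e' ∈ A' := mem_insert_self _ _
  have heA' : e ∉ A' := by
    simp only [hA', mem_insert, mem_erase]
    rintro (h | ⟨h, _⟩) <;> simp_all
  have hmemA' : ∀ x : Fin N, x ∈ A' ↔ x = e' ∨ (x ∈ A ∧ x ≠ e) := by
    intro x
    simp only [hA', mem_insert, mem_erase]
    constructor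
    · rintro (h | ⟨h1, h2⟩); · exact Or.inl h
      exact Or.inr ⟨h2, h1⟩
    · rintro (h | ⟨h1, h2⟩); · exact Or.inl h
      exact Or.inr ⟨h2, h1⟩
  have hc : A'.card = A.card := by
    rw [hA', card_insert_of_notMem (by
      simp only [mem_erase]; rintro ⟨-, h⟩; exact hne h), card_erase_of_mem he]
    have : 0 < A.card := card_pos.2 ⟨e, he⟩
    omega
  have hcc : A'ᶜ.card = Aᶜ.card := by rw [card_compl_eq, card_compl_eq, hc]
  have hswA : ∀ x ∈ A', Equiv.swap e' e x ∈ A := by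
    intro x hx
    rw [Equiv.swap_apply_def]
    split_ifs with h1 h2
    · exact he
    · exact absurd (h2 ▸ hx) heA'
    · rcases (hmemA' x).1 hx with h | ⟨h3, _⟩
      · exact absurd h h1
      · exact h3
  have hmonoA : ∀ x ∈ A', ∀ y ∈ A', x < y → Equiv.swap e' e x < Equiv.swap e' e y := by
    intro x hx y hy hxy
    have hxe : x ≠ e := fun h => heA' (h ▸ hx)
    have hye : y ≠ e := fun h => heA' (h ▸ hy)
    rw [Equiv.swap_apply_def, Equiv.swap_apply_def]
    simp only [Fin.lt_def, Fin.ext_iff] at *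
    split_ifs <;> omega
  have hswC : ∀ x ∈ A'ᶜ, Equiv.swap e' e x ∈ Aᶜ := by
    intro x hx
    rw [mem_compl] at hx ⊢
    rw [Equiv.swap_apply_def]
    split_ifs with h1 h2
    · exact absurd (h1 ▸ he'A') hx
    · exact hne
    · intro hxA
      exact hx ((hmemA' x).2 (Or.inr ⟨hxA, h2⟩))
  have hmonoC : ∀ x ∈ A'ᶜ, ∀ y ∈ A'ᶜ, x < y → Equiv.swap e' e x < Equiv.swap e' e y := by
    intro x hx y hy hxy
    rw [mem_compl] at hx hy
    have hxe : x ≠ e' := fun h => hx (h ▸ he'A')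
    have hye : y ≠ e' := fun h => hy (h ▸ he'A')
    rw [Equiv.swap_apply_def, Equiv.swap_apply_def]
    simp only [Fin.lt_def, Fin.ext_iff] at *
    split_ifs <;> omega
  apply Equiv.ext
  intro t
  rw [Equiv.Perm.mul_apply]
  by_cases h : t.val < A.card
  · rw [shuffle_apply_lt A t h, shuffle_apply_lt A' t (hc ▸ h)]
    have h1 : A'.orderEmbOfFin rfl ⟨t.val, hc ▸ h⟩ = A'.orderEmbOfFin hc ⟨t.val, h⟩ :=
      Finset.orderEmbOfFin_eq_orderEmbOfFin_iff.2 rfl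
    rw [h1]
    exact (orderEmb_comp_mono hc _ hswA hmonoA _).symm
  · push_neg at h
    rw [shuffle_apply_ge A t h, shuffle_apply_ge A' t (hc ▸ h)]
    have h2 : A'ᶜ.orderEmbOfFin rfl ⟨t.val - A'.card, by have := card_compl_eq A'; omega⟩
        = A'ᶜ.orderEmbOfFin hcc ⟨t.val - A.card, by have := card_compl_eq A; omega⟩ :=
      Finset.orderEmbOfFin_eq_orderEmbOfFin_iff.2 (by show t.val - A'.card = _; rw [hc])
    rw [h2]
    exact (orderEmb_comp_mono hcc _ hswC hmonoC _).symm
end PfAux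

namespace PfAux2
open PfAux

variable {N : ℕ}

lemma closed_of_no_pred (A : Finset (Fin N))
    (h : ∀ e ∈ A, 0 < e.val → ∀ f : Fin N, f.val + 1 = e.val → f ∈ A) :
    ∀ e ∈ A, ∀ f : Fin N, f ≤ e → f ∈ A := by
  have key : ∀ d : ℕ, ∀ e ∈ A, ∀ f : Fin N, f ≤ e → e.val - f.val = d → f ∈ A := by
    intro d
    induction d with
    | zero =>
      intro e he f hfe hd
      have : f = e := Fin.ext (by
        have := (Fin.le_def).1 hfe
        omega)
      exact this ▸ he
    | succ d ihd =>
      intro e he f hfe hd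
      have hlt : f.val < e.val := by
        have := (Fin.le_def).1 hfe
        omega
      have hpre : (⟨e.val - 1, Nat.lt_of_le_of_lt (Nat.sub_le _ _) e.isLt⟩ : Fin N) ∈ A :=
        h e he (by omega) _ (by simp; omega)
      exact ihd _ hpre f (Fin.le_def.2 (by simp; omega)) (by simp; omega)
  intro e he f hfe
  exact key _ e he f hfe rfl

lemma mem_iff_lt_card_of_closed (A : Finset (Fin N))
    (hcl : ∀ e ∈ A, ∀ f : Fin N, f ≤ e → f ∈ A) (x : Fin N) :
    x ∈ A ↔ x.val < A.card := by
  constructor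
  · intro hx
    have hsub : Finset.Iic x ⊆ A := fun y hy => hcl x hx y (mem_Iic.1 hy)
    have := Finset.card_le_card hsub
    rw [Fin.card_Iic] at this
    omega
  · intro hx
    by_contra hxA
    have hsub : A ⊆ Finset.Iio x := fun y hy => by
      rw [mem_Iio]
      rcases lt_or_ge y x with hlt | hge
      · exact hlt
      · exact absurd (hcl y hy x hge) hxA
    have := Finset.card_le_card hsub
    rw [Fin.card_Iio] at this
    omega

lemma shuffle_eq_one_of_closed (A : Finset (Fin N))
    (hcl : ∀ e ∈ A, ∀ f : Fin N, f ≤ e → f ∈ A) :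
    shuffle A = 1 := by
  have hmem := mem_iff_lt_card_of_closed A hcl
  have hcard : A.card ≤ N := le_of_le_of_eq (card_le_univ A) (by simp)
  have hccard := card_compl_eq A
  have hembA : ∀ i : Fin A.card, A.orderEmbOfFin rfl i = ⟨i.val, by omega⟩ := by
    have := Finset.orderEmbOfFin_unique (s := A) rfl
      (f := fun i : Fin A.card => (⟨i.val, by omega⟩ : Fin N))
      (fun i => (hmem _).2 (by simpa using i.isLt))
      (fun i j hij => Fin.mk_lt_mk.2 hij)
    intro i
    exact (congrFun this i).symm
  have hembC : ∀ j : Fin Aᶜ.card, Aᶜ.orderEmbOfFin rfl j = ⟨A.card + j.val, by omega⟩ := by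
    have := Finset.orderEmbOfFin_unique (s := Aᶜ) rfl
      (f := fun j : Fin Aᶜ.card => (⟨A.card + j.val, by omega⟩ : Fin N))
      (fun j => by
        rw [mem_compl]
        intro hmemA
        have := (hmem _).1 hmemA
        simp at this)
      (fun i j hij => Fin.mk_lt_mk.2 (Nat.add_lt_add_left hij _))
    intro j
    exact (congrFun this j).symm
  apply Equiv.ext
  intro t
  by_cases h : t.val < A.card
  · rw [shuffle_apply_lt A t h, hembA]
    apply Fin.ext
    simp
  · push_neg at h
    rw [shuffle_apply_ge A t h, hembC]
    apply Fin.ext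
    simp
    omega

lemma sum_of_closed (A : Finset (Fin N))
    (hcl : ∀ e ∈ A, ∀ f : Fin N, f ≤ e → f ∈ A) :
    ∑ e ∈ A, e.val = (A.card).choose 2 := by
  have hmem := mem_iff_lt_card_of_closed A hcl
  have hcard : A.card ≤ N := le_of_le_of_eq (card_le_univ A) (by simp)
  have hembA : ∀ i : Fin A.card, A.orderEmbOfFin rfl i = ⟨i.val, by omega⟩ := by
    have := Finset.orderEmbOfFin_unique (s := A) rfl
      (f := fun i : Fin A.card => (⟨i.val, by omega⟩ : Fin N))
      (fun i => (hmem _).2 (by simpa using i.isLt))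
      (fun i j hij => Fin.mk_lt_mk.2 hij)
    intro i
    exact (congrFun this i).symm
  have h1 : ∑ e ∈ A, e.val = ∑ x : ↥A, (x : Fin N).val := (Finset.sum_coe_sort A _).symm
  have h2 : ∑ x : ↥A, (x : Fin N).val = ∑ i : Fin A.card, ((A.orderIsoOfFin rfl i : Fin N)).val :=
    (Fintype.sum_equiv (A.orderIsoOfFin rfl).toEquiv (fun i => ((A.orderIsoOfFin rfl i : Fin N)).val)
      (fun x => (x : Fin N).val) (fun i => rfl)).symm
  have h3 : ∀ i : Fin A.card, ((A.orderIsoOfFin rfl i : Fin N)).val = i.val := by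
    intro i
    rw [show ((A.orderIsoOfFin rfl i : Fin N)) = A.orderEmbOfFin rfl i from rfl, hembA]
  rw [h1, h2]
  simp only [h3]
  rw [Fin.sum_univ_eq_sum_range (fun i => i) A.card, Finset.sum_range_id,
    Nat.choose_two_right]

lemma sign_shuffle (A : Finset (Fin N)) :
    Equiv.Perm.sign (shuffle A) = (-1) ^ (∑ e ∈ A, e.val + (A.card).choose 2) := by
  suffices H : ∀ s : ℕ, ∀ A : Finset (Fin N), ∑ e ∈ A, e.val = s →
      Equiv.Perm.sign (shuffle A) = (-1) ^ (∑ e ∈ A, e.val + (A.card).choose 2) from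
    H _ A rfl
  intro s
  induction s using Nat.strong_induction_on with
  | _ s ih =>
    intro A hA
    by_cases hex : ∃ e ∈ A, 0 < e.val ∧
        (⟨e.val - 1, Nat.lt_of_le_of_lt (Nat.sub_le _ _) e.isLt⟩ : Fin N) ∉ A
    · obtain ⟨e, he, hpos, hne⟩ := hex
      set e' : Fin N := ⟨e.val - 1, Nat.lt_of_le_of_lt (Nat.sub_le _ _) e.isLt⟩ with he'def
      have he' : e'.val + 1 = e.val := by simp [he'def]; omega
      rw [shuffle_step A e e' he he' hne]
      rw [map_mul, Equiv.Perm.sign_swap (fun h => by rw [h] at he'; omega)]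
      set A' := insert e' (A.erase e) with hA'
      have hne'erase : e' ∉ A.erase e := by
        simp only [mem_erase]; rintro ⟨-, h⟩; exact hne h
      have hc : A'.card = A.card := by
        rw [hA', card_insert_of_notMem hne'erase, card_erase_of_mem he]
        have : 0 < A.card := card_pos.2 ⟨e, he⟩
        omega
      have hsum_er : ∑ x ∈ A.erase e, x.val + e.val = s := by
        rw [Finset.sum_erase_add _ _ he, hA]
      have hsum' : ∑ x ∈ A', x.val + 1 = s := by
        rw [hA', Finset.sum_insert hne'erase]
        have : e'.val + 1 = e.val := he'
        omega
      have hslt : s - 1 < s := by omega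
      have := ih (s - 1) hslt A' (by omega)
      rw [this]
      rw [hc, show ∑ x ∈ A', x.val = s - 1 from by omega, hA]
      rw [show s + (A.card).choose 2 = (s - 1 + (A.card).choose 2) + 1 by omega]
      rw [pow_succ, mul_comm]
    · push_neg at hex
      have hcl : ∀ e ∈ A, ∀ f : Fin N, f ≤ e → f ∈ A := by
        apply closed_of_no_pred
        intro e he hp f hf
        have : f = (⟨e.val - 1, Nat.lt_of_le_of_lt (Nat.sub_le _ _) e.isLt⟩ : Fin N) :=
          Fin.ext (by simp; omega)
        rw [this]
        exact hex e he hp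
      rw [shuffle_eq_one_of_closed A hcl, sum_of_closed A hcl, map_one]
      exact (Even.neg_one_pow ⟨(A.card).choose 2, by ring⟩).symm


variable {m n k : ℕ}

/-- Juxtaposition of two permutations. -/
def sumPerm {a b c : ℕ} (h : a + b = c) (τ : Equiv.Perm (Fin a)) (ρ : Equiv.Perm (Fin b)) :
    Equiv.Perm (Fin c) :=
  (finSumFinEquiv.trans (finCongr h)).permCongr (Equiv.sumCongr τ ρ)

lemma sign_sumPerm {a b c : ℕ} (h : a + b = c) (τ : Equiv.Perm (Fin a))
    (ρ : Equiv.Perm (Fin b)) :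
    Equiv.Perm.sign (sumPerm h τ ρ) = Equiv.Perm.sign τ * Equiv.Perm.sign ρ := by
  rw [sumPerm, Equiv.Perm.sign_permCongr, Equiv.Perm.sign_sumCongr]

lemma sumPerm_apply_lt {a b c : ℕ} (h : a + b = c) (τ : Equiv.Perm (Fin a))
    (ρ : Equiv.Perm (Fin b)) (t : Fin c) (ht : t.val < a) :
    sumPerm h τ ρ t = ⟨(τ ⟨t.val, ht⟩).val, by omega⟩ := by
  simp only [sumPerm, Equiv.permCongr_apply, Equiv.trans_apply, finCongr_symm,
    Equiv.symm_trans_apply, finCongr_apply]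
  rw [show (Fin.cast h.symm t) = Fin.castAdd b ⟨t.val, ht⟩ by ext; simp]
  rw [finSumFinEquiv_symm_apply_castAdd]
  simp only [Equiv.sumCongr_apply, Sum.map_inl, finSumFinEquiv_apply_left]
  ext; simp

lemma sumPerm_apply_ge {a b c : ℕ} (h : a + b = c) (τ : Equiv.Perm (Fin a))
    (ρ : Equiv.Perm (Fin b)) (t : Fin c) (ht : a ≤ t.val) :
    sumPerm h τ ρ t = ⟨a + (ρ ⟨t.val - a, by omega⟩).val, by
      have := (ρ ⟨t.val - a, by omega⟩).isLt; omega⟩ := by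
  simp only [sumPerm, Equiv.permCongr_apply, Equiv.trans_apply, finCongr_symm,
    Equiv.symm_trans_apply, finCongr_apply]
  rw [show (Fin.cast h.symm t) = Fin.natAdd a ⟨t.val - a, by omega⟩ by ext; simp; omega]
  rw [finSumFinEquiv_symm_apply_natAdd]
  simp only [Equiv.sumCongr_apply, Sum.map_inr, finSumFinEquiv_apply_right]
  ext; simp

end PfAux2


section Blocks

open PfAux PfAux2

variable {m n k : ℕ}

lemma blkOf_idx (i : Fin n) (r : Fin m) : blkOf m n (idx m n i r) = i := by
  apply Fin.ext
  show (i.val * m + r.val) / m = i.val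
  rw [Nat.add_comm, Nat.add_mul_div_right _ _ r.pos, Nat.div_eq_of_lt r.isLt, Nat.zero_add]

lemma posOf_idx (i : Fin n) (r : Fin m) : posOf m n (idx m n i r) = r := by
  apply Fin.ext
  show (i.val * m + r.val) % m = r.val
  rw [Nat.add_comm, Nat.add_mul_mod_self_right, Nat.mod_eq_of_lt r.isLt]

lemma idx_blkOf_posOf (t : Fin (m * n)) : idx m n (blkOf m n t) (posOf m n t) = t := by
  apply Fin.ext
  show t.val / m * m + t.val % m = t.val
  rw [Nat.mul_comm]
  exact Nat.div_add_mod _ _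

lemma idx_val (i : Fin n) (r : Fin m) : (idx m n i r).val = i.val * m + r.val := rfl

/-- The set of positions whose block lies in `S`. -/
def blocksOf (m n : ℕ) (S : Finset (Fin n)) : Finset (Fin (m * n)) :=
  Finset.univ.filter (fun t => blkOf m n t ∈ S)

lemma mem_blocksOf {S : Finset (Fin n)} (t : Fin (m * n)) :
    t ∈ blocksOf m n S ↔ blkOf m n t ∈ S := by simp [blocksOf]

lemma mem_blocksOf_idx {S : Finset (Fin n)} (i : Fin n) (r : Fin m) :
    idx m n i r ∈ blocksOf m n S ↔ i ∈ S := by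
  rw [mem_blocksOf, blkOf_idx]

lemma blocksOf_compl (S : Finset (Fin n)) : (blocksOf m n S)ᶜ = blocksOf m n Sᶜ := by
  ext t
  simp [blocksOf]

lemma idx_injective (i : Fin n) : Function.Injective (idx m n i) := by
  intro r r' h
  apply Fin.ext
  have := congrArg Fin.val h
  simp only [idx_val] at this
  omega

lemma blocksOf_eq_biUnion (S : Finset (Fin n)) :
    blocksOf m n S = S.biUnion (fun i => Finset.univ.image (idx m n i)) := by
  ext t
  rw [mem_blocksOf, Finset.mem_biUnion]
  constructor
  · intro h
    exact ⟨blkOf m n t, h, Finset.mem_image.2 ⟨posOf m n t, Finset.mem_univ _,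
      idx_blkOf_posOf t⟩⟩
  · rintro ⟨i, hi, ht⟩
    rw [Finset.mem_image] at ht
    obtain ⟨r, -, rfl⟩ := ht
    rwa [blkOf_idx]

lemma blocksOf_disj (S : Finset (Fin n)) : ∀ x ∈ S, ∀ y ∈ S, x ≠ y →
    Disjoint (Finset.univ.image (idx m n x)) (Finset.univ.image (idx m n y)) := by
  intro x _ y _ hxy
  rw [Finset.disjoint_left]
  intro t ht ht'
  rw [Finset.mem_image] at ht ht'
  obtain ⟨r, -, rfl⟩ := ht
  obtain ⟨r', -, h⟩ := ht'
  exact hxy (by rw [← blkOf_idx y r', h, blkOf_idx])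

lemma card_blocksOf (S : Finset (Fin n)) : (blocksOf m n S).card = m * S.card := by
  rw [blocksOf_eq_biUnion, Finset.card_biUnion (blocksOf_disj S)]
  rw [Finset.sum_congr rfl (fun i _ => Finset.card_image_of_injective _ (idx_injective i))]
  rw [Finset.sum_const, smul_eq_mul, Finset.card_univ, Fintype.card_fin, mul_comm]

lemma sum_fin_val : ∑ r : Fin m, r.val = m.choose 2 := by
  rw [Fin.sum_univ_eq_sum_range (fun i => i), Finset.sum_range_id, Nat.choose_two_right]

lemma sum_blocksOf (S : Finset (Fin n)) :
    ∑ e ∈ blocksOf m n S, e.val = m * m * (∑ i ∈ S, i.val) + S.card * m.choose 2 := by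
  rw [blocksOf_eq_biUnion, Finset.sum_biUnion (fun x hx y hy hxy =>
    blocksOf_disj S x (Finset.mem_coe.1 hx) y (Finset.mem_coe.1 hy) hxy)]
  have hinner : ∀ i : Fin n, ∑ e ∈ Finset.univ.image (idx m n i), e.val
      = m * m * i.val + m.choose 2 := by
    intro i
    rw [Finset.sum_image (fun a _ b _ h => idx_injective i h)]
    simp only [idx_val]
    rw [Finset.sum_add_distrib, Finset.sum_const, sum_fin_val]
    simp only [smul_eq_mul, Finset.card_univ, Fintype.card_fin]
    ring
  rw [Finset.sum_congr rfl (fun i _ => hinner i), Finset.sum_add_distrib,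
    ← Finset.mul_sum, Finset.sum_const, smul_eq_mul]

lemma choose_two_mul_two (a : ℕ) : a.choose 2 * 2 = a * (a - 1) := by
  rw [Nat.choose_two_right, ← Finset.sum_range_id, Finset.sum_range_id_mul_two]

lemma parity_even (hmk : Even (m * k)) (l x : ℕ) :
    Even (k * (m * m * x + l * m.choose 2 + (m * l).choose 2)) := by
  rcases Nat.even_mul.mp hmk with hm | hk
  · apply Even.mul_left
    obtain ⟨t, ht⟩ := hm
    have hmm : Even (m * m * x) := ⟨t * m * x, by rw [ht]; ring⟩
    rcases Nat.eq_zero_or_pos l with rfl | hl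
    · simpa using hmm
    rcases Nat.eq_zero_or_pos m with rfl | hm1
    · simp
    have h1 : m.choose 2 * 2 = m * (m - 1) := choose_two_mul_two m
    have h2 : (m * l).choose 2 * 2 = (m * l) * (m * l - 1) := choose_two_mul_two _
    have e1 : m.choose 2 = t * (m - 1) := by
      have : m * (m - 1) = t * (m - 1) + t * (m - 1) := by rw [ht]; ring
      omega
    have e2 : (m * l).choose 2 = t * l * (m * l - 1) := by
      have : (m * l) * (m * l - 1) = t * l * (m * l - 1) + t * l * (m * l - 1) := by
        rw [ht]; ring
      omega
    have key : Even (l * m.choose 2 + (m * l).choose 2) := by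
      rw [e1, e2, show l * (t * (m - 1)) = t * l * (m - 1) from by ring, ← Nat.mul_add]
      apply Even.mul_left
      have hml : m ≤ m * l := Nat.le_mul_of_pos_right m hl
      have hml2 : m * l = t * l + t * l := by rw [ht]; ring
      rw [Nat.even_iff]
      omega
    rw [add_assoc]
    exact hmm.add key
  · exact hk.mul_right _

end Blocks



section Core

open PfAux PfAux2

variable {m n k N : ℕ}

lemma shuffle_orderEmb {A : Finset (Fin N)} {a : ℕ} (hA : A.card = a) (u : Fin a)
    (x : Fin N) (hx : x.val = u.val) : shuffle A x = A.orderEmbOfFin hA u := by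
  have hu : x.val < A.card := by rw [hx, hA]; exact u.isLt
  rw [shuffle_apply_lt A x hu]
  exact Finset.orderEmbOfFin_eq_orderEmbOfFin_iff.2 hx

lemma shuffle_orderEmb_ge {A : Finset (Fin N)} {a b : ℕ} (hA : A.card = a)
    (hb : Aᶜ.card = b) (u : Fin b) (x : Fin N) (hx : x.val = a + u.val) :
    shuffle A x = Aᶜ.orderEmbOfFin hb u := by
  have hu : A.card ≤ x.val := by omega
  rw [shuffle_apply_ge A x hu]
  exact Finset.orderEmbOfFin_eq_orderEmbOfFin_iff.2 (by simp only []; omega)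

lemma shuffle_mem_iff (A : Finset (Fin N)) (x : Fin N) :
    shuffle A x ∈ A ↔ x.val < A.card := by
  by_cases h : x.val < A.card
  · simp only [h, iff_true]
    rw [shuffle_apply_lt A x h]
    exact Finset.orderEmbOfFin_mem _ _ _
  · push_neg at h
    simp only [Nat.not_lt.2 h, iff_false]
    rw [shuffle_apply_ge A x h]
    have := Finset.orderEmbOfFin_mem Aᶜ (rfl : Aᶜ.card = Aᶜ.card)
      ⟨x.val - A.card, by have := card_compl_eq A; omega⟩
    rw [Finset.mem_compl] at this
    exact this

lemma orderEmbOfFin_congr {A B : Finset (Fin N)} (hAB : A = B) {a : ℕ}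
    (h : A.card = a) (h' : B.card = a) (i : Fin a) :
    A.orderEmbOfFin h i = B.orderEmbOfFin h' i := by
  subst hAB
  exact Finset.orderEmbOfFin_eq_orderEmbOfFin_iff.2 rfl

lemma image_iff {A I : Finset (Fin N)} (σ : Equiv.Perm (Fin N)) (h : A.image σ = I) :
    ∀ x, x ∈ A ↔ σ x ∈ I := by
  intro x
  subst h
  constructor
  · exact fun hx => Finset.mem_image_of_mem _ hx
  · intro hx
    obtain ⟨y, hy, hxy⟩ := Finset.mem_image.1 hx
    rwa [← σ.injective hxy]

lemma image_compl_iff {A I : Finset (Fin N)} (σ : Equiv.Perm (Fin N)) (h : A.image σ = I) :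
    ∀ x, x ∈ Aᶜ ↔ σ x ∈ Iᶜ := by
  intro x
  rw [Finset.mem_compl, Finset.mem_compl, not_iff_not]
  exact image_iff σ h x

/-- The restriction of a permutation mapping `A` onto `I` to a permutation of `Fin a`
through the order isomorphisms. -/
noncomputable def tauOf {a : ℕ} (A I : Finset (Fin N)) (hA : A.card = a) (hI : I.card = a)
    (σ : Equiv.Perm (Fin N)) (him : ∀ x, x ∈ A ↔ σ x ∈ I) : Equiv.Perm (Fin a) :=
  ((A.orderIsoOfFin hA).toEquiv.trans (σ.subtypeEquiv him)).trans
    (I.orderIsoOfFin hI).toEquiv.symm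

lemma tauOf_spec {a : ℕ} (A I : Finset (Fin N)) (hA : A.card = a) (hI : I.card = a)
    (σ : Equiv.Perm (Fin N)) (him : ∀ x, x ∈ A ↔ σ x ∈ I) (u : Fin a) :
    I.orderEmbOfFin hI (tauOf A I hA hI σ him u) = σ (A.orderEmbOfFin hA u) := by
  have h1 : tauOf A I hA hI σ him u
      = (I.orderIsoOfFin hI).symm ⟨σ (A.orderEmbOfFin hA u),
          (him _).1 (Finset.orderEmbOfFin_mem _ _ _)⟩ := rfl
  rw [h1, ← Finset.coe_orderIsoOfFin_apply, OrderIso.apply_symm_apply]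

variable (m)

lemma orderEmb_blocksOf {l : ℕ} (S : Finset (Fin n)) (hl : S.card = l)
    (h : (blocksOf m n S).card = m * l) (u : Fin (m * l)) :
    (blocksOf m n S).orderEmbOfFin h u
      = idx m n (S.orderEmbOfFin hl (blkOf m l u)) (posOf m l u) := by
  have key := Finset.orderEmbOfFin_unique (s := blocksOf m n S) h
    (f := fun u : Fin (m * l) =>
      idx m n (S.orderEmbOfFin hl (blkOf m l u)) (posOf m l u))
    (fun u => (mem_blocksOf_idx _ _).2 (Finset.orderEmbOfFin_mem _ _ _))
    (fun u u' huu => by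
      have hm : 0 < m := (posOf m l u).pos
      have h1 := Nat.div_add_mod u.val m
      have h1' := Nat.div_add_mod u'.val m
      have hb : u.val / m ≤ u'.val / m := Nat.div_le_div_right (le_of_lt huu)
      have hpu : u.val % m < m := Nat.mod_lt _ hm
      have hpu' : u'.val % m < m := Nat.mod_lt _ hm
      rcases lt_or_eq_of_le hb with hlt | heq
      · have hbf : blkOf m l u < blkOf m l u' := Fin.mk_lt_mk.2 hlt
        have hemb := (S.orderEmbOfFin hl).strictMono hbf
        have hemb' : (S.orderEmbOfFin hl (blkOf m l u)).val
            < (S.orderEmbOfFin hl (blkOf m l u')).val := hemb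
        rw [Fin.lt_def]
        show (S.orderEmbOfFin hl (blkOf m l u)).val * m + (posOf m l u).val
          < (S.orderEmbOfFin hl (blkOf m l u')).val * m + (posOf m l u').val
        have hmul : ((S.orderEmbOfFin hl (blkOf m l u)).val + 1) * m
            ≤ (S.orderEmbOfFin hl (blkOf m l u')).val * m :=
          Nat.mul_le_mul_right m hemb'
        have : (posOf m l u).val < m := (posOf m l u).isLt
        rw [Nat.succ_mul] at hmul
        omega
      · have hd : m * (u.val / m) = m * (u'.val / m) := by rw [heq]
        have hbf : blkOf m l u = blkOf m l u' := Fin.ext heq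
        rw [Fin.lt_def]
        show (S.orderEmbOfFin hl (blkOf m l u)).val * m + (posOf m l u).val
          < (S.orderEmbOfFin hl (blkOf m l u')).val * m + (posOf m l u').val
        rw [hbf]
        have : (posOf m l u).val < (posOf m l u').val := by
          show u.val % m < u'.val % m
          omega
        omega)
  exact (congrFun key u).symm

lemma orderEmb_blocksOf_compl {l : ℕ} (S : Finset (Fin n)) (hl : S.card = l)
    (hlc : Sᶜ.card = n - l)
    (hAc : (blocksOf m n S)ᶜ.card = m * (n - l)) (u : Fin (m * (n - l))) :
    (blocksOf m n S)ᶜ.orderEmbOfFin hAc u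
      = idx m n (Sᶜ.orderEmbOfFin hlc (blkOf m (n - l) u)) (posOf m (n - l) u) := by
  have hAc' : (blocksOf m n Sᶜ).card = m * (n - l) := by rw [card_blocksOf, hlc]
  rw [orderEmbOfFin_congr (blocksOf_compl S) hAc hAc' u,
    orderEmb_blocksOf m Sᶜ hlc hAc' u]

lemma shuffle_blocksOf_lt {l : ℕ} (S : Finset (Fin n)) (hl : S.card = l)
    (i' : Fin l) (r : Fin m) (x : Fin (m * n)) (hx : x.val = i'.val * m + r.val) :
    shuffle (blocksOf m n S) x = idx m n (S.orderEmbOfFin hl i') r := by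
  have hA : (blocksOf m n S).card = m * l := by rw [card_blocksOf, hl]
  rw [shuffle_orderEmb hA (idx m l i' r) x hx,
    orderEmb_blocksOf m S hl hA (idx m l i' r), blkOf_idx, posOf_idx]

lemma shuffle_blocksOf_ge {l : ℕ} (S : Finset (Fin n)) (hl : S.card = l)
    (hlc : Sᶜ.card = n - l)
    (i' : Fin (n - l)) (r : Fin m) (x : Fin (m * n))
    (hx : x.val = m * l + (i'.val * m + r.val)) :
    shuffle (blocksOf m n S) x = idx m n (Sᶜ.orderEmbOfFin hlc i') r := by
  have hA : (blocksOf m n S).card = m * l := by rw [card_blocksOf, hl]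
  have hAc : (blocksOf m n S)ᶜ.card = m * (n - l) := by
    rw [blocksOf_compl, card_blocksOf, hlc]
  rw [shuffle_orderEmb_ge hA hAc (idx m (n - l) i' r) x hx,
    orderEmb_blocksOf_compl m S hl hlc hAc, blkOf_idx, posOf_idx]

lemma phi_eval_lt {a b : ℕ} (hab : a + b = N) (I : Finset (Fin N)) (hI : I.card = a)
    (τ : Equiv.Perm (Fin a)) (ρ : Equiv.Perm (Fin b)) (x : Fin N) (hx : x.val < a) :
    shuffle I (sumPerm hab τ ρ x) = I.orderEmbOfFin hI (τ ⟨x.val, hx⟩) := by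
  rw [sumPerm_apply_lt hab τ ρ x hx]
  exact shuffle_orderEmb hI _ _ rfl

lemma phi_eval_ge {a b : ℕ} (hab : a + b = N) (I : Finset (Fin N)) (hI : I.card = a)
    (hIc : Iᶜ.card = b)
    (τ : Equiv.Perm (Fin a)) (ρ : Equiv.Perm (Fin b)) (x : Fin N) (hx : a ≤ x.val) :
    shuffle I (sumPerm hab τ ρ x) = Iᶜ.orderEmbOfFin hIc (ρ ⟨x.val - a, by omega⟩) := by
  rw [sumPerm_apply_ge hab τ ρ x hx]
  exact shuffle_orderEmb_ge hI hIc _ _ rfl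

lemma prod_emb {l : ℕ} (S : Finset (Fin n)) (hl : S.card = l) (f : Fin n → ℚ) :
    ∏ i ∈ S, f i = ∏ i' : Fin l, f (S.orderEmbOfFin hl i') := by
  rw [← Finset.prod_coe_sort S f]
  exact (Fintype.prod_equiv (S.orderIsoOfFin hl).toEquiv
    (fun i' => f (S.orderEmbOfFin hl i')) (fun x => f x) (fun i => rfl)).symm

end Core


section Core2

open PfAux PfAux2

variable {m k n l : ℕ}

/-- The column permutations built from a family of index sets and two families of
block-increasing permutations. -/
noncomputable def Phi (S : Finset (Fin n)) (hml : m * l + m * (n - l) = m * n)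
    (I : Fin k → Finset (Fin (m * n)))
    (τ : Fin k → Equiv.Perm (Fin (m * l))) (ρ : Fin k → Equiv.Perm (Fin (m * (n - l)))) :
    Fin k → Equiv.Perm (Fin (m * n)) :=
  fun s => shuffle (I s) * sumPerm hml (τ s) (ρ s) * (shuffle (blocksOf m n S))⁻¹

lemma Phi_apply_shuffle (S : Finset (Fin n)) (hml : m * l + m * (n - l) = m * n)
    (I : Fin k → Finset (Fin (m * n)))
    (τ : Fin k → Equiv.Perm (Fin (m * l))) (ρ : Fin k → Equiv.Perm (Fin (m * (n - l))))
    (s : Fin k) (x : Fin (m * n)) :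
    Phi S hml I τ ρ s (shuffle (blocksOf m n S) x)
      = shuffle (I s) (sumPerm hml (τ s) (ρ s) x) := by
  simp [Phi, Equiv.Perm.mul_apply]

lemma Phi_idx_mem (S : Finset (Fin n)) (hl : S.card = l)
    (hml : m * l + m * (n - l) = m * n)
    (I : Fin k → Finset (Fin (m * n))) (hI : ∀ s, (I s).card = m * l)
    (τ : Fin k → Equiv.Perm (Fin (m * l))) (ρ : Fin k → Equiv.Perm (Fin (m * (n - l))))
    (s : Fin k) (i' : Fin l) (r : Fin m) :
    Phi S hml I τ ρ s (idx m n (S.orderEmbOfFin hl i') r)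
      = (I s).orderEmbOfFin (hI s) (τ s (idx m l i' r)) := by
  have hxl : (idx m l i' r).val < m * l := (idx m l i' r).isLt
  set x : Fin (m * n) := ⟨(idx m l i' r).val, by omega⟩ with hxdef
  have h1 : shuffle (blocksOf m n S) x = idx m n (S.orderEmbOfFin hl i') r :=
    shuffle_blocksOf_lt m S hl i' r x rfl
  rw [← h1, Phi_apply_shuffle]
  exact phi_eval_lt hml (I s) (hI s) (τ s) (ρ s) x hxl

lemma Phi_idx_notmem (S : Finset (Fin n)) (hl : S.card = l) (hlc : Sᶜ.card = n - l)
    (hml : m * l + m * (n - l) = m * n)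
    (I : Fin k → Finset (Fin (m * n))) (hI : ∀ s, (I s).card = m * l)
    (hIc : ∀ s, (I s)ᶜ.card = m * (n - l))
    (τ : Fin k → Equiv.Perm (Fin (m * l))) (ρ : Fin k → Equiv.Perm (Fin (m * (n - l))))
    (s : Fin k) (i' : Fin (n - l)) (r : Fin m) :
    Phi S hml I τ ρ s (idx m n (Sᶜ.orderEmbOfFin hlc i') r)
      = (I s)ᶜ.orderEmbOfFin (hIc s) (ρ s (idx m (n - l) i' r)) := by
  have hxl : (idx m (n - l) i' r).val < m * (n - l) := (idx m (n - l) i' r).isLt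
  set x : Fin (m * n) := ⟨m * l + (idx m (n - l) i' r).val, by omega⟩ with hxdef
  have h1 : shuffle (blocksOf m n S) x = idx m n (Sᶜ.orderEmbOfFin hlc i') r :=
    shuffle_blocksOf_ge m S hl hlc i' r x rfl
  have hge : m * l ≤ x.val := by simp [hxdef]
  rw [← h1, Phi_apply_shuffle, phi_eval_ge hml (I s) (hI s) (hIc s) (τ s) (ρ s) x hge]
  congr 1
  apply congrArg
  apply Fin.ext
  simp [hxdef]

lemma exists_emb {l : ℕ} (S : Finset (Fin n)) (hl : S.card = l) {i : Fin n} (hi : i ∈ S) :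
    ∃ i', S.orderEmbOfFin hl i' = i := by
  have h := Finset.range_orderEmbOfFin S hl
  have : i ∈ Set.range (S.orderEmbOfFin hl) := by rw [h]; exact_mod_cast hi
  exact this

lemma Phi_BI (S : Finset (Fin n)) (hl : S.card = l) (hlc : Sᶜ.card = n - l)
    (hml : m * l + m * (n - l) = m * n)
    (I : Fin k → Finset (Fin (m * n))) (hI : ∀ s, (I s).card = m * l)
    (hIc : ∀ s, (I s)ᶜ.card = m * (n - l))
    (τ : Fin k → Equiv.Perm (Fin (m * l))) (ρ : Fin k → Equiv.Perm (Fin (m * (n - l))))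
    (hτ : ∀ j, BlockIncr m l (τ j)) (hρ : ∀ j, BlockIncr m (n - l) (ρ j)) (s : Fin k) :
    BlockIncr m n (Phi S hml I τ ρ s) := by
  intro i r r' hrr
  by_cases hi : i ∈ S
  · obtain ⟨i', rfl⟩ := exists_emb S hl hi
    rw [Phi_idx_mem S hl hml I hI τ ρ s i' r, Phi_idx_mem S hl hml I hI τ ρ s i' r']
    exact ((I s).orderEmbOfFin (hI s)).strictMono (hτ s i' r r' hrr)
  · obtain ⟨i', rfl⟩ := exists_emb Sᶜ hlc (Finset.mem_compl.2 hi)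
    rw [Phi_idx_notmem S hl hlc hml I hI hIc τ ρ s i' r,
      Phi_idx_notmem S hl hlc hml I hI hIc τ ρ s i' r']
    exact ((I s)ᶜ.orderEmbOfFin (hIc s)).strictMono (hρ s i' r r' hrr)

lemma Phi_image (S : Finset (Fin n)) (hl : S.card = l)
    (hml : m * l + m * (n - l) = m * n)
    (I : Fin k → Finset (Fin (m * n))) (hI : ∀ s, (I s).card = m * l)
    (τ : Fin k → Equiv.Perm (Fin (m * l))) (ρ : Fin k → Equiv.Perm (Fin (m * (n - l))))
    (s : Fin k) :
    (blocksOf m n S).image (Phi S hml I τ ρ s) = I s := by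
  have hA : (blocksOf m n S).card = m * l := by rw [card_blocksOf, hl]
  apply Finset.eq_of_subset_of_card_le
  · intro y hy
    obtain ⟨x0, hx0, rfl⟩ := Finset.mem_image.1 hy
    set u := (shuffle (blocksOf m n S)).symm x0 with hu
    have hux : shuffle (blocksOf m n S) u = x0 := Equiv.apply_symm_apply _ _
    have hul : u.val < m * l := by
      rw [← hA, ← shuffle_mem_iff, hux]; exact hx0
    rw [← hux, Phi_apply_shuffle, phi_eval_lt hml (I s) (hI s) (τ s) (ρ s) u hul]
    exact Finset.orderEmbOfFin_mem _ _ _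
  · rw [Finset.card_image_of_injective _ (Equiv.injective _), hA, hI s]

lemma tauOf_BI (S : Finset (Fin n)) (hl : S.card = l)
    (hA : (blocksOf m n S).card = m * l) (Iset : Finset (Fin (m * n)))
    (hI : Iset.card = m * l) (σ : Equiv.Perm (Fin (m * n))) (hσ : BlockIncr m n σ)
    (him : ∀ x, x ∈ blocksOf m n S ↔ σ x ∈ Iset) :
    BlockIncr m l (tauOf (blocksOf m n S) Iset hA hI σ him) := by
  intro i' r r' hrr
  have key : ∀ r : Fin m,
      Iset.orderEmbOfFin hI (tauOf (blocksOf m n S) Iset hA hI σ him (idx m l i' r))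
      = σ (idx m n (S.orderEmbOfFin hl i') r) := by
    intro r0
    rw [tauOf_spec, orderEmb_blocksOf m S hl hA, blkOf_idx, posOf_idx]
  have h2 := hσ (S.orderEmbOfFin hl i') r r' hrr
  rw [← key r, ← key r'] at h2
  exact (Iset.orderEmbOfFin hI).strictMono.lt_iff_lt.1 h2

lemma rhoOf_BI (S : Finset (Fin n)) (hl : S.card = l) (hlc : Sᶜ.card = n - l)
    (hAc : (blocksOf m n S)ᶜ.card = m * (n - l)) (Iset : Finset (Fin (m * n)))
    (hIc : Isetᶜ.card = m * (n - l)) (σ : Equiv.Perm (Fin (m * n))) (hσ : BlockIncr m n σ)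
    (him : ∀ x, x ∈ (blocksOf m n S)ᶜ ↔ σ x ∈ Isetᶜ) :
    BlockIncr m (n - l) (tauOf (blocksOf m n S)ᶜ Isetᶜ hAc hIc σ him) := by
  intro i' r r' hrr
  have key : ∀ r : Fin m,
      Isetᶜ.orderEmbOfFin hIc (tauOf (blocksOf m n S)ᶜ Isetᶜ hAc hIc σ him (idx m (n - l) i' r))
      = σ (idx m n (Sᶜ.orderEmbOfFin hlc i') r) := by
    intro r0
    rw [tauOf_spec, orderEmb_blocksOf_compl m S hl hlc hAc, blkOf_idx, posOf_idx]
  have h2 := hσ (Sᶜ.orderEmbOfFin hlc i') r r' hrr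
  rw [← key r, ← key r'] at h2
  exact (Isetᶜ.orderEmbOfFin hIc).strictMono.lt_iff_lt.1 h2

end Core2


section Core3

open PfAux PfAux2

variable {m k n l : ℕ}

lemma Phi_tauOf (S : Finset (Fin n)) (hml : m * l + m * (n - l) = m * n)
    (hA : (blocksOf m n S).card = m * l) (hAc : (blocksOf m n S)ᶜ.card = m * (n - l))
    (I : Fin k → Finset (Fin (m * n))) (hI : ∀ s, (I s).card = m * l)
    (hIc : ∀ s, (I s)ᶜ.card = m * (n - l)) (σ : Fin k → Equiv.Perm (Fin (m * n)))
    (him : ∀ s x, x ∈ blocksOf m n S ↔ σ s x ∈ I s)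
    (himc : ∀ s x, x ∈ (blocksOf m n S)ᶜ ↔ σ s x ∈ (I s)ᶜ) :
    Phi S hml I (fun s => tauOf _ (I s) hA (hI s) (σ s) (him s))
      (fun s => tauOf _ (I s)ᶜ hAc (hIc s) (σ s) (himc s)) = σ := by
  funext s
  apply Equiv.ext
  intro x
  set u := (shuffle (blocksOf m n S)).symm x with hu
  have hux : shuffle (blocksOf m n S) u = x := Equiv.apply_symm_apply _ _
  rw [← hux, Phi_apply_shuffle]
  by_cases hul : u.val < m * l
  · rw [phi_eval_lt hml (I s) (hI s) _ _ u hul, tauOf_spec,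
      ← shuffle_orderEmb hA ⟨u.val, hul⟩ u rfl]
  · push_neg at hul
    rw [phi_eval_ge hml (I s) (hI s) (hIc s) _ _ u hul, tauOf_spec,
      ← shuffle_orderEmb_ge hA hAc ⟨u.val - m * l, by
        have := u.isLt; omega⟩ u (by show u.val = m * l + (u.val - m * l); omega)]

lemma Phi_value (S : Finset (Fin n)) (hl : S.card = l) (hlc : Sᶜ.card = n - l)
    (hml : m * l + m * (n - l) = m * n)
    (M N : (Fin k → Fin m → Fin (m * n)) → ℚ)
    (I : Fin k → Finset (Fin (m * n))) (hI : ∀ s, (I s).card = m * l)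
    (hIc : ∀ s, (I s)ᶜ.card = m * (n - l))
    (τ : Fin k → Equiv.Perm (Fin (m * l))) (ρ : Fin k → Equiv.Perm (Fin (m * (n - l)))) :
    (∏ j, ((Equiv.Perm.sign (Phi S hml I τ ρ j) : ℤ) : ℚ)) *
      ((∏ i ∈ S, M (fun j r => Phi S hml I τ ρ j (idx m n i r))) *
       (∏ i ∈ Sᶜ, N (fun j r => Phi S hml I τ ρ j (idx m n i r))))
    = ((∏ s, ((Equiv.Perm.sign (shuffle (I s)) : ℤ) : ℚ)) *
        ((Equiv.Perm.sign (shuffle (blocksOf m n S)) : ℤ) : ℚ) ^ k) *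
      (((∏ j, ((Equiv.Perm.sign (τ j) : ℤ) : ℚ)) *
          ∏ i, M (fun j r => (I j).orderEmbOfFin (hI j) (τ j (idx m l i r)))) *
       ((∏ j, ((Equiv.Perm.sign (ρ j) : ℤ) : ℚ)) *
          ∏ i, N (fun j r => (I j)ᶜ.orderEmbOfFin (hIc j) (ρ j (idx m (n - l) i r))))) := by
  have hsgn : ∀ j, ((Equiv.Perm.sign (Phi S hml I τ ρ j) : ℤ) : ℚ)
      = ((Equiv.Perm.sign (shuffle (I j)) : ℤ) : ℚ) *
        (((Equiv.Perm.sign (τ j) : ℤ) : ℚ) * ((Equiv.Perm.sign (ρ j) : ℤ) : ℚ)) *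
        ((Equiv.Perm.sign (shuffle (blocksOf m n S)) : ℤ) : ℚ) := by
    intro j
    have h1 : Equiv.Perm.sign (Phi S hml I τ ρ j)
        = Equiv.Perm.sign (shuffle (I j)) *
          (Equiv.Perm.sign (τ j) * Equiv.Perm.sign (ρ j)) *
          Equiv.Perm.sign (shuffle (blocksOf m n S)) := by
      show Equiv.Perm.sign (shuffle (I j) * sumPerm hml (τ j) (ρ j) *
        (shuffle (blocksOf m n S))⁻¹) = _
      rw [map_mul, map_mul, Equiv.Perm.sign_inv, sign_sumPerm]
    rw [h1]
    push_cast
    ring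
  rw [Finset.prod_congr rfl (fun j _ => hsgn j), Finset.prod_mul_distrib,
    Finset.prod_mul_distrib, Finset.prod_mul_distrib, Finset.prod_const,
    Finset.card_univ, Fintype.card_fin]
  have hM : ∏ i ∈ S, M (fun j r => Phi S hml I τ ρ j (idx m n i r))
      = ∏ i' : Fin l, M (fun j r => (I j).orderEmbOfFin (hI j) (τ j (idx m l i' r))) := by
    rw [prod_emb S hl]
    exact Finset.prod_congr rfl (fun i' _ => congrArg M (funext fun j => funext fun r =>
      Phi_idx_mem S hl hml I hI τ ρ j i' r))
  have hN : ∏ i ∈ Sᶜ, N (fun j r => Phi S hml I τ ρ j (idx m n i r))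
      = ∏ i' : Fin (n - l),
          N (fun j r => (I j)ᶜ.orderEmbOfFin (hIc j) (ρ j (idx m (n - l) i' r))) := by
    rw [prod_emb Sᶜ hlc]
    exact Finset.prod_congr rfl (fun i' _ => congrArg N (funext fun j => funext fun r =>
      Phi_idx_notmem S hl hlc hml I hI hIc τ ρ j i' r))
  rw [hM, hN]
  ring

lemma core_sum (m k : ℕ) {n l : ℕ} (S : Finset (Fin n)) (hl : S.card = l) (hln : l ≤ n)
    (M N : (Fin k → Fin m → Fin (m * n)) → ℚ)
    (I : Fin k → Finset (Fin (m * n))) (hI : ∀ s, (I s).card = m * l)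
    (hIc : ∀ s, (I s)ᶜ.card = m * (n - l)) :
    ∑ σ ∈ (Finset.univ.filter (fun σ : Fin k → Equiv.Perm (Fin (m * n)) =>
        ∀ j, BlockIncr m n (σ j))).filter
        (fun σ => (fun s => (blocksOf m n S).image (σ s)) = I),
      (∏ j, ((Equiv.Perm.sign (σ j) : ℤ) : ℚ)) *
        ((∏ i ∈ S, M (fun j r => σ j (idx m n i r))) *
         (∏ i ∈ Sᶜ, N (fun j r => σ j (idx m n i r))))
    = ((∏ s, ((Equiv.Perm.sign (shuffle (I s)) : ℤ) : ℚ)) *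
        ((Equiv.Perm.sign (shuffle (blocksOf m n S)) : ℤ) : ℚ) ^ k) *
      ((∑ τ ∈ Finset.univ.filter (fun τ : Fin k → Equiv.Perm (Fin (m * l)) =>
          ∀ j, BlockIncr m l (τ j)),
        (∏ j, ((Equiv.Perm.sign (τ j) : ℤ) : ℚ)) *
          ∏ i, M (fun j r => (I j).orderEmbOfFin (hI j) (τ j (idx m l i r)))) *
       (∑ ρ ∈ Finset.univ.filter (fun ρ : Fin k → Equiv.Perm (Fin (m * (n - l))) =>
          ∀ j, BlockIncr m (n - l) (ρ j)),
        (∏ j, ((Equiv.Perm.sign (ρ j) : ℤ) : ℚ)) *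
          ∏ i, N (fun j r => (I j)ᶜ.orderEmbOfFin (hIc j) (ρ j (idx m (n - l) i r))))) := by
  have hml : m * l + m * (n - l) = m * n := by
    rw [← Nat.mul_add, Nat.add_sub_cancel' hln]
  have hlc : Sᶜ.card = n - l := by rw [card_compl_eq, hl]
  set A := blocksOf m n S with hAdef
  have hA : A.card = m * l := by rw [hAdef, card_blocksOf, hl]
  have hAc : Aᶜ.card = m * (n - l) := by rw [card_compl_eq, hA]; omega
  -- target as a sum over pairs
  set Dt := Finset.univ.filter (fun τ : Fin k → Equiv.Perm (Fin (m * l)) =>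
    ∀ j, BlockIncr m l (τ j)) with hDt
  set Dr := Finset.univ.filter (fun ρ : Fin k → Equiv.Perm (Fin (m * (n - l))) =>
    ∀ j, BlockIncr m (n - l) (ρ j)) with hDr
  set c : ℚ := (∏ s, ((Equiv.Perm.sign (shuffle (I s)) : ℤ) : ℚ)) *
    ((Equiv.Perm.sign (shuffle A) : ℤ) : ℚ) ^ k with hc
  set F := fun τ : Fin k → Equiv.Perm (Fin (m * l)) =>
    (∏ j, ((Equiv.Perm.sign (τ j) : ℤ) : ℚ)) *
      ∏ i, M (fun j r => (I j).orderEmbOfFin (hI j) (τ j (idx m l i r))) with hF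
  set G := fun ρ : Fin k → Equiv.Perm (Fin (m * (n - l))) =>
    (∏ j, ((Equiv.Perm.sign (ρ j) : ℤ) : ℚ)) *
      ∏ i, N (fun j r => (I j)ᶜ.orderEmbOfFin (hIc j) (ρ j (idx m (n - l) i r))) with hG
  have main : ∑ σ ∈ (Finset.univ.filter (fun σ : Fin k → Equiv.Perm (Fin (m * n)) =>
        ∀ j, BlockIncr m n (σ j))).filter
        (fun σ => (fun s => A.image (σ s)) = I),
      (∏ j, ((Equiv.Perm.sign (σ j) : ℤ) : ℚ)) *
        ((∏ i ∈ S, M (fun j r => σ j (idx m n i r))) *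
         (∏ i ∈ Sᶜ, N (fun j r => σ j (idx m n i r))))
      = ∑ p ∈ Dt ×ˢ Dr, c * (F p.1 * G p.2) := by
    refine Finset.sum_bij'
      (i := fun σ hσ =>
        (fun s => tauOf A (I s) hA (hI s) (σ s)
          (image_iff (σ s) (congrFun (Finset.mem_filter.1 hσ).2 s)),
         fun s => tauOf Aᶜ (I s)ᶜ hAc (hIc s) (σ s)
          (image_compl_iff (σ s) (congrFun (Finset.mem_filter.1 hσ).2 s))))
      (j := fun p _ => Phi S hml I p.1 p.2) ?_ ?_ ?_ ?_ ?_
    · -- i maps into Dt ×ˢ Dr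
      intro σ hσ
      have hBI : ∀ j, BlockIncr m n (σ j) :=
        (Finset.mem_filter.1 (Finset.mem_filter.1 hσ).1).2
      rw [Finset.mem_product]
      constructor
      · rw [hDt, Finset.mem_filter]
        exact ⟨Finset.mem_univ _, fun j => tauOf_BI S hl hA (I j) (hI j) (σ j) (hBI j) _⟩
      · rw [hDr, Finset.mem_filter]
        exact ⟨Finset.mem_univ _, fun j => rhoOf_BI S hl hlc hAc (I j) (hIc j) (σ j) (hBI j) _⟩
    · -- j maps into lhs set
      intro p hp
      rw [Finset.mem_product] at hp
      obtain ⟨hp1, hp2⟩ := hp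
      rw [hDt, Finset.mem_filter] at hp1
      rw [hDr, Finset.mem_filter] at hp2
      rw [Finset.mem_filter]
      refine ⟨Finset.mem_filter.2 ⟨Finset.mem_univ _, fun j =>
        Phi_BI S hl hlc hml I hI hIc p.1 p.2 hp1.2 hp2.2 j⟩, ?_⟩
      funext s
      exact Phi_image S hl hml I hI p.1 p.2 s
    · -- left inverse : Phi (Ψ σ) = σ
      intro σ hσ
      funext s
      apply Equiv.ext
      intro x
      set u := (shuffle A).symm x with hu
      have hux : shuffle A u = x := Equiv.apply_symm_apply _ _
      rw [← hux, Phi_apply_shuffle]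
      by_cases hul : u.val < m * l
      · rw [phi_eval_lt hml (I s) (hI s) _ _ u hul, tauOf_spec,
          ← shuffle_orderEmb hA ⟨u.val, hul⟩ u rfl]
      · push_neg at hul
        rw [phi_eval_ge hml (I s) (hI s) (hIc s) _ _ u hul, tauOf_spec,
          ← shuffle_orderEmb_ge hA hAc ⟨u.val - m * l, by
            have := u.isLt; omega⟩ u (by show u.val = m * l + (u.val - m * l); omega)]
    · -- right inverse : Ψ (Phi p) = p
      intro p hp
      have key1 : ∀ s u, Phi S hml I p.1 p.2 s (A.orderEmbOfFin hA u)
          = (I s).orderEmbOfFin (hI s) (p.1 s u) := by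
        intro s u
        have hlt : u.val < m * l := u.isLt
        set x0 : Fin (m * n) := ⟨u.val, by omega⟩ with hx0
        have h1 : shuffle A x0 = A.orderEmbOfFin hA u := shuffle_orderEmb hA u x0 rfl
        rw [← h1, Phi_apply_shuffle, phi_eval_lt hml (I s) (hI s) _ _ x0 hlt]
      have key2 : ∀ s u, Phi S hml I p.1 p.2 s (Aᶜ.orderEmbOfFin hAc u)
          = (I s)ᶜ.orderEmbOfFin (hIc s) (p.2 s u) := by
        intro s u
        have hlt : u.val < m * (n - l) := u.isLt
        set x0 : Fin (m * n) := ⟨m * l + u.val, by omega⟩ with hx0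
        have h1 : shuffle A x0 = Aᶜ.orderEmbOfFin hAc u := shuffle_orderEmb_ge hA hAc u x0 rfl
        have hge : m * l ≤ x0.val := by simp [hx0]
        rw [← h1, Phi_apply_shuffle, phi_eval_ge hml (I s) (hI s) (hIc s) _ _ x0 hge]
        congr 1
        apply congrArg
        apply Fin.ext
        simp [hx0]
      apply Prod.ext
      · funext s
        apply Equiv.ext
        intro u
        apply ((I s).orderEmbOfFin (hI s)).injective
        rw [tauOf_spec, key1]
      · funext s
        apply Equiv.ext
        intro u
        apply ((I s)ᶜ.orderEmbOfFin (hIc s)).injective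
        rw [tauOf_spec, key2]
    · -- values
      intro σ hσ
      have himg := (Finset.mem_filter.1 hσ).2
      have him : ∀ s x, x ∈ A ↔ σ s x ∈ I s :=
        fun s => image_iff (σ s) (congrFun himg s)
      have himc : ∀ s x, x ∈ Aᶜ ↔ σ s x ∈ (I s)ᶜ :=
        fun s => image_compl_iff (σ s) (congrFun himg s)
      have hphi := Phi_tauOf S hml hA hAc I hI hIc σ him himc
      conv_lhs => rw [← hphi]
      exact Phi_value S hl hlc hml M N I hI hIc _ _
  rw [main, ← Finset.mul_sum, Finset.sum_product, ← Finset.sum_mul_sum]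

end Core3


section Final

open PfAux PfAux2

lemma signQ_shuffle {N : ℕ} (A : Finset (Fin N)) :
    ((Equiv.Perm.sign (shuffle A) : ℤ) : ℚ)
      = (-1) ^ (∑ e ∈ A, e.val + A.card.choose 2) := by
  rw [PfAux2.sign_shuffle]
  push_cast
  ring

lemma key_sum (m k : ℕ) {n l : ℕ} (hmk : Even (m * k)) (S : Finset (Fin n))
    (hS : S.card = l) (hln : l ≤ n) (M N : (Fin k → Fin m → Fin (m * n)) → ℚ) :
    ∑ σ ∈ Finset.univ.filter (fun σ : Fin k → Equiv.Perm (Fin (m * n)) =>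
        ∀ j, BlockIncr m n (σ j)),
      (∏ j, ((Equiv.Perm.sign (σ j) : ℤ) : ℚ)) *
        ((∏ i ∈ S, M (fun j r => σ j (idx m n i r))) *
         (∏ i ∈ Sᶜ, N (fun j r => σ j (idx m n i r))))
    = ∑ I : Fin k → Finset (Fin (m * n)),
        if h : ∀ s, (I s).card = m * l then
          (-1 : ℚ) ^ (k * Nat.choose (l * m + 1) 2 +
              ∑ s : Fin k, ∑ e ∈ I s, ((e : ℕ) + 1)) *
            ((∑ τ ∈ Finset.univ.filter (fun τ : Fin k → Equiv.Perm (Fin (m * l)) =>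
                ∀ j, BlockIncr m l (τ j)),
              (∏ j, ((Equiv.Perm.sign (τ j) : ℤ) : ℚ)) *
                ∏ i, M (fun j r => (I j).orderEmbOfFin (h j) (τ j (idx m l i r)))) *
             (∑ ρ ∈ Finset.univ.filter (fun ρ : Fin k → Equiv.Perm (Fin (m * (n - l))) =>
                ∀ j, BlockIncr m (n - l) (ρ j)),
              (∏ j, ((Equiv.Perm.sign (ρ j) : ℤ) : ℚ)) *
                ∏ i, N (fun j r => (I j)ᶜ.orderEmbOfFin
                  (by rw [card_compl_eq, h j, Nat.mul_sub])
                  (ρ j (idx m (n - l) i r)))))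
        else 0 := by
  classical
  have hA : (blocksOf m n S).card = m * l := by rw [card_blocksOf, hS]
  have hmaps : ∀ σ ∈ Finset.univ.filter (fun σ : Fin k → Equiv.Perm (Fin (m * n)) =>
      ∀ j, BlockIncr m n (σ j)),
      (fun s => (blocksOf m n S).image (σ s)) ∈
        Finset.univ.filter (fun I : Fin k → Finset (Fin (m * n)) =>
          ∀ s, (I s).card = m * l) := by
    intro σ _
    rw [Finset.mem_filter]
    exact ⟨Finset.mem_univ _, fun s => by
      rw [Finset.card_image_of_injective _ (Equiv.injective _), hA]⟩
  rw [← Finset.sum_fiberwise_of_maps_to hmaps]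
  rw [← Finset.sum_filter_add_sum_filter_not Finset.univ
    (fun I : Fin k → Finset (Fin (m * n)) => ∀ s, (I s).card = m * l)]
  have h0 : ∑ I ∈ Finset.univ.filter (fun I : Fin k → Finset (Fin (m * n)) =>
      ¬ ∀ s, (I s).card = m * l), (if h : ∀ s, (I s).card = m * l then
        (-1 : ℚ) ^ (k * Nat.choose (l * m + 1) 2 +
            ∑ s : Fin k, ∑ e ∈ I s, ((e : ℕ) + 1)) *
          ((∑ τ ∈ Finset.univ.filter (fun τ : Fin k → Equiv.Perm (Fin (m * l)) =>
              ∀ j, BlockIncr m l (τ j)),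
            (∏ j, ((Equiv.Perm.sign (τ j) : ℤ) : ℚ)) *
              ∏ i, M (fun j r => (I j).orderEmbOfFin (h j) (τ j (idx m l i r)))) *
           (∑ ρ ∈ Finset.univ.filter (fun ρ : Fin k → Equiv.Perm (Fin (m * (n - l))) =>
              ∀ j, BlockIncr m (n - l) (ρ j)),
            (∏ j, ((Equiv.Perm.sign (ρ j) : ℤ) : ℚ)) *
              ∏ i, N (fun j r => (I j)ᶜ.orderEmbOfFin
                (by rw [card_compl_eq, h j, Nat.mul_sub])
                (ρ j (idx m (n - l) i r)))))
      else 0) = 0 :=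
    Finset.sum_eq_zero (fun I hI => dif_neg (Finset.mem_filter.1 hI).2)
  rw [h0, add_zero]
  apply Finset.sum_congr rfl
  intro I hImem
  have hI : ∀ s, (I s).card = m * l := (Finset.mem_filter.1 hImem).2
  rw [dif_pos hI]
  have hIc : ∀ s, (I s)ᶜ.card = m * (n - l) := fun s => by
    rw [card_compl_eq, hI s, Nat.mul_sub]
  rw [core_sum m k S hS hln M N I hI hIc]
  have e1 : ∀ s : Fin k, ((Equiv.Perm.sign (shuffle (I s)) : ℤ) : ℚ)
      = (-1) ^ ((∑ e ∈ I s, e.val) + (m * l).choose 2) := fun s => by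
    rw [signQ_shuffle, hI s]
  rw [Finset.prod_congr rfl (fun s _ => e1 s), Finset.prod_pow_eq_pow_sum]
  rw [signQ_shuffle, ← pow_mul]
  have heven : Even ((∑ e ∈ blocksOf m n S, e.val +
      (blocksOf m n S).card.choose 2) * k) := by
    rw [hA, sum_blocksOf S, hS, Nat.mul_comm]
    exact parity_even hmk l _
  rw [Even.neg_one_pow heven, mul_one]
  have hbneg : (-1 : ℚ) ^ (k * Nat.choose (l * m + 1) 2 +
        ∑ s : Fin k, ∑ e ∈ I s, ((e : ℕ) + 1))
      = (-1) ^ (∑ s : Fin k, ((∑ e ∈ I s, e.val) + (m * l).choose 2)) := by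
    have h1 : ∀ s : Fin k, ∑ e ∈ I s, (e.val + 1) = (∑ e ∈ I s, e.val) + m * l := by
      intro s
      rw [Finset.sum_add_distrib, Finset.sum_const, smul_eq_mul, mul_one, hI s]
    have h1' : ∑ s : Fin k, ∑ e ∈ I s, (e.val + 1)
        = (∑ s : Fin k, ∑ e ∈ I s, e.val) + k * (m * l) := by
      rw [Finset.sum_congr rfl (fun s _ => h1 s), Finset.sum_add_distrib,
        Finset.sum_const, smul_eq_mul, Finset.card_univ, Fintype.card_fin]
    have h2 : Nat.choose (l * m + 1) 2 = l * m + (l * m).choose 2 := by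
      rw [Nat.choose_succ_succ, Nat.choose_one_right]
    have h3 : ∑ s : Fin k, ((∑ e ∈ I s, e.val) + (m * l).choose 2)
        = (∑ s : Fin k, ∑ e ∈ I s, e.val) + k * ((m * l).choose 2) := by
      rw [Finset.sum_add_distrib, Finset.sum_const, smul_eq_mul,
        Finset.card_univ, Fintype.card_fin]
    have h5 : k * (l * m + (l * m).choose 2) = k * (l * m) + k * ((l * m).choose 2) :=
      Nat.mul_add _ _ _
    have h6 : l * m = m * l := Nat.mul_comm l m
    have hb : k * Nat.choose (l * m + 1) 2 + ∑ s : Fin k, ∑ e ∈ I s, (e.val + 1)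
        = (∑ s : Fin k, ((∑ e ∈ I s, e.val) + (m * l).choose 2))
          + (k * (m * l) + k * (m * l)) := by
      rw [h2, h5, h1', h3, h6]
      omega
    rw [hb, pow_add, Even.neg_one_pow ⟨k * (m * l), rfl⟩, mul_one]
  rw [hbneg]

end Final

/-- Sum formula for generalized pfaffians: `Pf_m(M + N)` expands as a signed sum of
products of a hyperminor pfaffian of `M` and the complementary hyperminor pfaffian
of `N`. -/
theorem pf_sum_formula (m k n : ℕ) (hmk : Even (m * k))
    (M N : (Fin k → Fin m → Fin (m * n)) → ℚ) :
    Pf m k n (fun f => M f + N f) =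
      ∑ l ∈ Finset.range (n + 1),
        ∑ I : Fin k → Finset (Fin (m * n)),
          if h : ∀ s, (I s).card = m * l then
            (-1 : ℚ) ^ (k * Nat.choose (l * m + 1) 2 +
                ∑ s : Fin k, ∑ e ∈ I s, ((e : ℕ) + 1)) *
              Pf m k l (hyperminor l M I h) *
              Pf m k (n - l) (hyperminor (n - l) N (fun s => (I s)ᶜ) (fun s => by
                rw [Finset.card_compl, h s, Fintype.card_fin, Nat.mul_sub]))
          else 0 := by
  classical
  simp only [Pf]
  have stepA : ∀ σ : Fin k → Equiv.Perm (Fin (m * n)),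
      (∏ j, ((Equiv.Perm.sign (σ j) : ℤ) : ℚ)) *
        ∏ i : Fin n, (M (fun j r => σ j (idx m n i r)) + N (fun j r => σ j (idx m n i r)))
      = ∑ S ∈ (Finset.univ : Finset (Fin n)).powerset,
          (∏ j, ((Equiv.Perm.sign (σ j) : ℤ) : ℚ)) *
            ((∏ i ∈ S, M (fun j r => σ j (idx m n i r))) *
             (∏ i ∈ Sᶜ, N (fun j r => σ j (idx m n i r)))) := by
    intro σ
    rw [Finset.prod_add, Finset.mul_sum]
    exact Finset.sum_congr rfl (fun S _ => by rw [Finset.compl_eq_univ_sdiff])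
  rw [Finset.sum_congr rfl (fun σ _ => stepA σ), Finset.sum_comm]
  have hmaps : ∀ S ∈ (Finset.univ : Finset (Fin n)).powerset,
      S.card ∈ Finset.range (n + 1) := fun S _ =>
    Finset.mem_range.2 (Nat.lt_succ_of_le (le_trans (Finset.card_le_univ S) (by simp)))
  rw [← Finset.sum_fiberwise_of_maps_to hmaps, Finset.mul_sum]
  apply Finset.sum_congr rfl
  intro l hl
  have hln : l ≤ n := by
    rw [Finset.mem_range] at hl
    omega
  rw [Finset.sum_congr rfl (fun S hSmem =>
    key_sum m k hmk S ((Finset.mem_filter.1 hSmem).2) hln M N)]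
  rw [Finset.sum_const]
  have hcardS : ((Finset.univ : Finset (Fin n)).powerset.filter
      (fun S => S.card = l)).card = n.choose l := by
    rw [← Finset.powersetCard_eq_filter, Finset.card_powersetCard, Finset.card_univ,
      Fintype.card_fin]
  rw [hcardS, nsmul_eq_mul, ← mul_assoc, Finset.mul_sum]
  apply Finset.sum_congr rfl
  intro I _
  by_cases hI : ∀ s, (I s).card = m * l
  · rw [dif_pos hI, dif_pos hI]
    have hTM : (∑ σ ∈ Finset.univ.filter (fun σ : Fin k → Equiv.Perm (Fin (m * l)) =>
            ∀ j, BlockIncr m l (σ j)),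
          (∏ j, ((Equiv.Perm.sign (σ j) : ℤ) : ℚ)) *
            ∏ i, hyperminor l M I hI (fun j r => σ j (idx m l i r)))
        = ∑ τ ∈ Finset.univ.filter (fun τ : Fin k → Equiv.Perm (Fin (m * l)) =>
            ∀ j, BlockIncr m l (τ j)),
          (∏ j, ((Equiv.Perm.sign (τ j) : ℤ) : ℚ)) *
            ∏ i, M (fun j r => (I j).orderEmbOfFin (hI j) (τ j (idx m l i r))) := rfl
    have hTN : (∑ σ ∈ Finset.univ.filter (fun σ : Fin k → Equiv.Perm (Fin (m * (n - l))) =>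
            ∀ j, BlockIncr m (n - l) (σ j)),
          (∏ j, ((Equiv.Perm.sign (σ j) : ℤ) : ℚ)) *
            ∏ i, hyperminor (n - l) N (fun s => (I s)ᶜ) (fun s => by
              rw [Finset.card_compl, hI s, Fintype.card_fin, Nat.mul_sub])
              (fun j r => σ j (idx m (n - l) i r)))
        = ∑ ρ ∈ Finset.univ.filter (fun ρ : Fin k → Equiv.Perm (Fin (m * (n - l))) =>
            ∀ j, BlockIncr m (n - l) (ρ j)),
          (∏ j, ((Equiv.Perm.sign (ρ j) : ℤ) : ℚ)) *
            ∏ i, N (fun j r => (I j)ᶜ.orderEmbOfFin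
              (by rw [PfAux.card_compl_eq, hI j, Nat.mul_sub])
              (ρ j (idx m (n - l) i r))) := rfl
    rw [hTM, hTN]
    have hfac : ((n.choose l : ℚ)) * (l.factorial : ℚ) * ((n - l).factorial : ℚ)
        = (n.factorial : ℚ) := by
      exact_mod_cast congrArg (Nat.cast : ℕ → ℚ)
        (Nat.choose_mul_factorial_mul_factorial hln)
    have hl0 : (l.factorial : ℚ) ≠ 0 := Nat.cast_ne_zero.2 (Nat.factorial_ne_zero l)
    have hnl0 : ((n - l).factorial : ℚ) ≠ 0 := Nat.cast_ne_zero.2 (Nat.factorial_ne_zero _)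
    have hn0 : (n.factorial : ℚ) ≠ 0 := Nat.cast_ne_zero.2 (Nat.factorial_ne_zero n)
    have hc : (n.factorial : ℚ)⁻¹ * (n.choose l : ℚ)
        = (l.factorial : ℚ)⁻¹ * ((n - l).factorial : ℚ)⁻¹ := by
      field_simp
      linarith [hfac]
    rw [hc]
    ring
  · rw [dif_neg hI, dif_neg hI, mul_zero]
end

section
/- Pf_m(A^{mk}) = (1/k!) Σ_{c ∈ LQ(m,k)} ε(c), where A^{mk} is the Levi-Civita (fully antisymmetric) tensor of order mk and side mk. -/
open Equiv Finset Function

lemma levi_row_eq (m k : ℕ) (σ : Fin k → Equiv.Perm (Fin (m * k))) (i : Fin k) :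
    levi m k (fun j r => σ j (idx m k i r)) =
      if h : Function.Bijective (lqRow m k σ i) then
        ((Equiv.Perm.sign (Equiv.ofBijective _ h) : ℤ) : ℚ) else 0 := rfl

/-- `Pf_m` of the Levi-Civita tensor of order and side `m*k` is `(1/k!)` times the
signed sum over `(m,k)`-latin quasisquares. -/
theorem pf_levi_eq_lq_sum (m k : ℕ) :
    Pf m k k (levi m k) = (k.factorial : ℚ)⁻¹ * ∑ σ ∈ LQ m k, LQsign m k σ := by
  unfold Pf LQ
  congr 1
  rw [Finset.sum_filter, Finset.sum_filter]
  refine Finset.sum_congr rfl fun σ _ => ?_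
  by_cases hb : ∀ j, BlockIncr m k (σ j)
  · rw [if_pos hb]
    by_cases hr : ∀ ℓ, Function.Bijective (lqRow m k σ ℓ)
    · rw [if_pos ⟨hb, hr⟩, LQsign, dif_pos hr]
      congr 1
      refine Finset.prod_congr rfl fun i _ => ?_
      rw [levi_row_eq, dif_pos (hr i)]
    · rw [if_neg (fun h : IsLQ m k σ => hr h.2)]
      push_neg at hr
      obtain ⟨ℓ, hℓ⟩ := hr
      have : ∏ i : Fin k, levi m k (fun j r => σ j (idx m k i r)) = 0 :=
        Finset.prod_eq_zero (Finset.mem_univ ℓ) (by rw [levi_row_eq, dif_neg hℓ])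
      rw [this, mul_zero]
  · rw [if_neg hb, if_neg (fun h : IsLQ m k σ => hb h.1)]
end

section
/- The hyperdeterminant of the Levi-Civita tensor of odd order k ≥ 3 vanishes: Det(A^k) = 0 for k odd. Equivalently, the signed count of k×k Latin squares (the Alon–Tarsi sum) is zero for odd k. -/
open Equiv Finset Function

/-- The hyperdeterminant of the Levi-Civita tensor of odd order `k ≥ 3` vanishes. -/
theorem det_levi_odd_eq_zero (k : ℕ) (hk : Odd k) (h3 : 3 ≤ k) :
    Pf 1 k k (levi 1 k) = 0 := by
  have hfilter : (Finset.univ.filter (fun σ : Fin k → Equiv.Perm (Fin (1 * k)) =>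
      ∀ j, BlockIncr 1 k (σ j))) = Finset.univ := by
    apply Finset.filter_true_of_mem
    intro σ _ j i r r' hrr'
    rw [Fin.lt_def] at hrr'
    have := r.isLt; have := r'.isLt
    omega
  unfold Pf
  rw [hfilter]
  set f : (Fin k → Equiv.Perm (Fin (1 * k))) → ℚ := fun σ =>
    (∏ j, ((Equiv.Perm.sign (σ j) : ℤ) : ℚ)) *
      ∏ i : Fin k, levi 1 k (fun j r => σ j (idx 1 k i r)) with hf
  suffices hS : (∑ σ : Fin k → Equiv.Perm (Fin (1 * k)), f σ) = 0 by
    rw [hS, mul_zero]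
  -- setup
  have h0 : (0 : ℕ) < k := by omega
  have h1 : (1 : ℕ) < k := by omega
  set a : Fin k := ⟨0, h0⟩
  set b : Fin k := ⟨1, h1⟩
  have hab : a ≠ b := by simp [a, b, Fin.ext_iff]
  set g : Fin k → Fin (1 * k) := fun i => idx 1 k i 0 with hg
  have hginj : Function.Injective g := by
    intro x y hxy
    simp only [hg, idx, Fin.mk.injEq] at hxy
    exact Fin.ext (by omega)
  set c : Equiv.Perm (Fin (1 * k)) := Equiv.swap (g a) (g b) with hc
  have hsignc : Equiv.Perm.sign c = -1 := Equiv.Perm.sign_swap (fun h => hab (hginj h))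
  set s : Equiv.Perm (Fin k) := Equiv.swap a b with hs
  have hidx : ∀ (i : Fin k) (r : Fin 1), idx 1 k i r = g i := by
    intro i r
    have := r.isLt
    simp only [hg, idx, Fin.mk.injEq]
    omega
  have hcg : ∀ i : Fin k, c (g i) = g (s i) := by
    intro i
    simp only [hc, hs]
    exact hginj.swap_apply a b i
  -- the key pointwise identity
  have key : ∀ σ : Fin k → Equiv.Perm (Fin (1 * k)), f (fun j => σ j * c) = - f σ := by
    intro σ
    simp only [hf]
    have hsg : ∀ j, ((Equiv.Perm.sign (σ j * c) : ℤ) : ℚ)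
        = (-1) * ((Equiv.Perm.sign (σ j) : ℤ) : ℚ) := by
      intro j
      rw [Equiv.Perm.sign_mul, hsignc]
      push_cast
      ring
    have hprod1 : (∏ j, ((Equiv.Perm.sign (σ j * c) : ℤ) : ℚ))
        = - ∏ j, ((Equiv.Perm.sign (σ j) : ℤ) : ℚ) := by
      rw [Finset.prod_congr rfl (fun j _ => hsg j), Finset.prod_mul_distrib,
        Finset.prod_const]
      simp [hk.neg_one_pow]
    have hprod2 : (∏ i : Fin k, levi 1 k (fun j r => (σ j * c) (idx 1 k i r)))
        = ∏ i : Fin k, levi 1 k (fun j r => σ j (idx 1 k i r)) := by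
      have heach : ∀ i : Fin k, (fun (j : Fin k) (r : Fin 1) => (σ j * c) (idx 1 k i r))
          = fun j r => σ j (idx 1 k (s i) r) := by
        intro i
        funext j r
        rw [hidx i r, hidx (s i) r]
        simp only [Equiv.Perm.mul_apply]
        rw [hcg i]
      rw [Finset.prod_congr rfl (fun i _ => by rw [heach i])]
      exact Equiv.prod_comp s (fun i => levi 1 k (fun j r => σ j (idx 1 k i r)))
    rw [hprod1, hprod2]
    ring
  -- reindex the sum
  have hsum : (∑ σ : Fin k → Equiv.Perm (Fin (1 * k)), f σ)
      = ∑ σ : Fin k → Equiv.Perm (Fin (1 * k)), f (fun j => σ j * c) := by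
    exact (Fintype.sum_equiv (Equiv.piCongrRight (fun _ => Equiv.mulRight c)) _ _
      (fun σ => rfl)).symm
  have : (∑ σ : Fin k → Equiv.Perm (Fin (1 * k)), f σ)
      = - ∑ σ : Fin k → Equiv.Perm (Fin (1 * k)), f σ := by
    conv_lhs => rw [hsum]
    simp only [key, Finset.sum_neg_distrib]
  linarith
end

section
/- If m is odd and k is odd with k ≥ 3, then (1/k!) Σ_{c ∈ LQ(m,k)} ε(c) = 0, i.e. the signed sum over (m,k)-latin quasisquares vanishes. -/
open Equiv Finset Function

namespace LQaux

/-- Equivalence `Fin k × Fin m ≃ Fin (m*k)` matching `idx`. -/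
def blkEquiv (m k : ℕ) : Fin k × Fin m ≃ Fin (m * k) :=
  finProdFinEquiv.trans (finCongr (Nat.mul_comm k m))

lemma blkEquiv_apply (m k : ℕ) (i : Fin k) (r : Fin m) :
    blkEquiv m k (i, r) = idx m k i r := by
  apply Fin.ext
  simp [blkEquiv, idx, finProdFinEquiv]
  ring

lemma idx_blk_pos (m k : ℕ) (t : Fin (m * k)) :
    idx m k (blkOf m k t) (posOf m k t) = t := by
  apply Fin.ext
  simp only [idx, blkOf, posOf]
  rw [Nat.mul_comm]
  exact Nat.div_add_mod _ _

/-- The permutation of `Fin (m*k)` exchanging block `a` with block `b`. -/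
def tau (m k : ℕ) (a b : Fin k) : Equiv.Perm (Fin (m * k)) :=
  (blkEquiv m k).permCongr (Equiv.prodCongrLeft fun _ : Fin m => Equiv.swap a b)

lemma tau_idx (m k : ℕ) (a b : Fin k) (i : Fin k) (r : Fin m) :
    tau m k a b (idx m k i r) = idx m k (Equiv.swap a b i) r := by
  rw [← blkEquiv_apply, ← blkEquiv_apply]
  simp [tau, Equiv.permCongr_apply, Equiv.prodCongrLeft_apply]

lemma tau_tau (m k : ℕ) (a b : Fin k) : tau m k a b * tau m k a b = 1 := by
  ext t
  obtain ⟨⟨i, r⟩, rfl⟩ := (blkEquiv m k).surjective t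
  rw [blkEquiv_apply]
  simp only [Equiv.Perm.mul_apply, Equiv.Perm.one_apply, tau_idx, Equiv.swap_apply_self]

lemma sign_tau (m k : ℕ) (a b : Fin k) (hab : a ≠ b) :
    Equiv.Perm.sign (tau m k a b) = (-1) ^ m := by
  simp [tau, Equiv.Perm.sign_permCongr, Equiv.Perm.sign_prodCongrLeft,
    Equiv.Perm.sign_swap hab]

lemma lqRow_mul_tau (m k : ℕ) (σ : Fin k → Equiv.Perm (Fin (m * k))) (a b ℓ : Fin k) :
    lqRow m k (fun j => σ j * tau m k a b) ℓ = lqRow m k σ (Equiv.swap a b ℓ) := by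
  funext t
  simp [lqRow, Equiv.Perm.mul_apply, tau_idx]

lemma sign_ofBijective_congr {n : ℕ} {f g : Fin n → Fin n} (h : f = g)
    (hf : Function.Bijective f) (hg : Function.Bijective g) :
    Equiv.Perm.sign (Equiv.ofBijective f hf) = Equiv.Perm.sign (Equiv.ofBijective g hg) := by
  subst h; rfl

end LQaux

/-- If `m` and `k` are both odd with `k ≥ 3`, the signed sum over `(m,k)`-latin
quasisquares vanishes. -/

theorem lq_sum_eq_zero_of_odd (m k : ℕ) (hm : Odd m) (hk : Odd k) (h3 : 3 ≤ k) :
    ∑ σ ∈ LQ m k, LQsign m k σ = 0 := by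
  have hm0 : 0 < m := hm.pos
  set a : Fin k := ⟨0, by omega⟩ with ha
  set b : Fin k := ⟨1, by omega⟩ with hb
  have hab : a ≠ b := by simp [ha, hb, Fin.ext_iff]
  set τ : Equiv.Perm (Fin (m * k)) := LQaux.tau m k a b with hτ
  have hsτ : Equiv.Perm.sign τ = -1 := by
    rw [hτ, LQaux.sign_tau m k a b hab, hm.neg_one_pow]
  apply Finset.sum_involution (g := fun σ _ => fun j => σ j * τ)
  · -- the signs cancel
    intro σ hσmem
    have hσ : IsLQ m k σ := (Finset.mem_filter.mp hσmem).2
    have hrow : ∀ ℓ, Function.Bijective (lqRow m k σ ℓ) := hσ.2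
    have hrow' : ∀ ℓ, Function.Bijective (lqRow m k (fun j => σ j * τ) ℓ) := by
      intro ℓ
      rw [hτ, LQaux.lqRow_mul_tau]
      exact hrow _
    have hc : (∏ j, ((Equiv.Perm.sign (σ j * τ) : ℤ) : ℚ))
        = -∏ j, ((Equiv.Perm.sign (σ j) : ℤ) : ℚ) := by
      have : ∀ j : Fin k, ((Equiv.Perm.sign (σ j * τ) : ℤ) : ℚ)
          = ((Equiv.Perm.sign (σ j) : ℤ) : ℚ) * (-1) := by
        intro j
        rw [map_mul, hsτ]
        push_cast
        ring
      rw [Finset.prod_congr rfl fun j _ => this j, Finset.prod_mul_distrib,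
        Finset.prod_const, Finset.card_univ, Fintype.card_fin, hk.neg_one_pow]
      ring
    have hr : (∏ ℓ, ((Equiv.Perm.sign (Equiv.ofBijective _ (hrow' ℓ)) : ℤ) : ℚ))
        = ∏ ℓ, ((Equiv.Perm.sign (Equiv.ofBijective _ (hrow ℓ)) : ℤ) : ℚ) := by
      rw [← Equiv.prod_comp (Equiv.swap a b)
        (fun ℓ => ((Equiv.Perm.sign (Equiv.ofBijective _ (hrow ℓ)) : ℤ) : ℚ))]
      refine Finset.prod_congr rfl fun ℓ _ => ?_
      have := LQaux.sign_ofBijective_congr (LQaux.lqRow_mul_tau m k σ a b ℓ)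
        (hrow' ℓ) (hrow (Equiv.swap a b ℓ))
      rw [this]
    simp only [LQsign]
    rw [dif_pos hrow, dif_pos hrow', hc, hr]
    ring
  · -- no fixed points
    intro σ _ _
    intro hcontra
    have h1 : σ a * τ = σ a := congrFun hcontra a
    have h2 : τ = 1 := by
      simpa [← mul_assoc] using congrArg (fun p => (σ a)⁻¹ * p) h1
    rw [h2] at hsτ
    simp at hsτ
  · -- membership
    intro σ hσmem
    have hσ : IsLQ m k σ := (Finset.mem_filter.mp hσmem).2
    refine Finset.mem_filter.mpr ⟨Finset.mem_univ _, ?_, ?_⟩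
    · intro j i r r' hrr'
      simp only [Equiv.Perm.mul_apply, hτ, LQaux.tau_idx]
      exact hσ.1 j _ r r' hrr'
    · intro ℓ
      rw [hτ, LQaux.lqRow_mul_tau]
      exact hσ.2 _
  · -- involution
    intro σ _
    funext j
    rw [mul_assoc, hτ, LQaux.tau_tau, mul_one]
end

section
/- Composition formula, simplest instance m = 2, m' = 1, p = 2, k = 2: for an n(=2N)-side matrix-like setting, Pf_2 of the tensor of 2×2 minors reproduces the determinant up to the multinomial factor. Concretely: for a 2n × 2n matrix M, define the 4-index tensor M' of side 2n by M'_{i_1,i_2,i_3,i_4} = det of the 2×2 submatrix of M with rows {i_1,i_2} (ordered increasingly) and columns {i_3,i_4} (ordered increasingly) when i_1<i_2 and i_3<i_4, extended antisymmetrically in (i_1,i_2) and in (i_3,i_4). Then Pf_2(M') = (C(2n, 2,...,2)/n!) · det(M) = ((2n)!/(2^n n!²)) · det(M). -/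
open Equiv Finset Function

namespace PfAux


variable {n : ℕ}

lemma idx_inj {i j : Fin n} {r r' : Fin 2} (h : idx 2 n i r = idx 2 n j r') :
    i = j ∧ r = r' := by
  have := congrArg Fin.val h
  simp only [idx] at this
  have hi : i.val = j.val ∧ r.val = r'.val := by omega
  exact ⟨Fin.ext hi.1, Fin.ext hi.2⟩

/-- every element of `Fin (2*n)` is of the form `idx i r` -/
lemma exists_idx (x : Fin (2 * n)) : ∃ i r, x = idx 2 n i r := by
  refine ⟨⟨x.val / 2, by omega⟩, ⟨x.val % 2, by omega⟩, ?_⟩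
  apply Fin.ext
  simp only [idx]
  omega

def flip : Fin 2 → Fin 2 := fun r => ⟨1 - r.val, by omega⟩

@[simp] lemma flip_flip (r : Fin 2) : flip (flip r) = r := by
  fin_cases r <;> rfl

lemma idx_ne (i : Fin n) : idx 2 n i 0 ≠ idx 2 n i 1 := by
  intro h; exact absurd (idx_inj h).2 (by decide)

/-- swap within block `i` -/
def sw (i : Fin n) : Equiv.Perm (Fin (2 * n)) := Equiv.swap (idx 2 n i 0) (idx 2 n i 1)

lemma sw_apply_same (i : Fin n) (r : Fin 2) : sw i (idx 2 n i r) = idx 2 n i (flip r) := by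
  fin_cases r
  · exact Equiv.swap_apply_left _ _
  · exact Equiv.swap_apply_right _ _

lemma sw_apply_ne {i j : Fin n} (h : i ≠ j) (r : Fin 2) : sw i (idx 2 n j r) = idx 2 n j r := by
  apply Equiv.swap_apply_of_ne_of_ne <;> intro hc <;> exact h ((idx_inj hc.symm).1)

lemma sw_comm {i j : Fin n} (h : i ≠ j) : Commute (sw i) (sw j) := by
  apply Equiv.Perm.Disjoint.commute
  intro x
  obtain ⟨a, r, rfl⟩ := exists_idx x
  by_cases hi : i = a
  · subst hi; exact Or.inr (sw_apply_ne (Ne.symm h) r)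
  · exact Or.inl (sw_apply_ne hi r)

lemma sw_comm_set (s : Finset (Fin n)) :
    (↑s : Set (Fin n)).Pairwise fun a b => Commute (sw a) (sw b) :=
  fun a _ b _ h => sw_comm h

/-- Product of the block swaps over `s`. -/
def bs (s : Finset (Fin n)) : Equiv.Perm (Fin (2 * n)) :=
  s.noncommProd sw (sw_comm_set s)

lemma bs_apply (s : Finset (Fin n)) (i : Fin n) (r : Fin 2) :
    bs s (idx 2 n i r) = idx 2 n i (if i ∈ s then flip r else r) := by
  classical
  induction s using Finset.induction with
  | empty => simp [bs]
  | @insert a s ha ih =>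
      have : bs (insert a s) = sw a * bs s := by
        simpa [bs] using Finset.noncommProd_insert_of_notMem s a sw (sw_comm_set _) ha
      rw [this]
      by_cases hia : i = a
      · subst hia
        simp only [Finset.mem_insert, true_or, if_true, Equiv.Perm.mul_apply, ih,
          if_neg ha, sw_apply_same]
      · simp only [Finset.mem_insert, hia, false_or, Equiv.Perm.mul_apply, ih]
        have hai : a ≠ i := fun hc => hia hc.symm
        by_cases his : i ∈ s <;> simp [his, sw_apply_ne hai]

lemma bs_sign (s : Finset (Fin n)) : Equiv.Perm.sign (bs s) = (-1) ^ s.card := by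
  classical
  unfold bs
  rw [Finset.map_noncommProd _ _ _ (Equiv.Perm.sign), Finset.noncommProd_eq_prod]
  have : ∀ i ∈ s, Equiv.Perm.sign (sw i) = -1 := by
    intro i _
    exact Equiv.Perm.sign_swap (idx_ne i)
  rw [Finset.prod_congr rfl this, Finset.prod_const]

lemma bs_involutive (s : Finset (Fin n)) : bs s * bs s = 1 := by
  ext x
  obtain ⟨i, r, rfl⟩ := exists_idx x
  simp only [Equiv.Perm.mul_apply, bs_apply, Equiv.Perm.one_apply]
  by_cases h : i ∈ s <;> simp [h]

lemma fin2_lt {r r' : Fin 2} (h : r < r') : r = 0 ∧ r' = 1 := by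
  revert h; revert r r'; decide

variable (n) in
/-- The block-increasing permutations. -/
noncomputable def S : Finset (Equiv.Perm (Fin (2 * n))) :=
  Finset.univ.filter (BlockIncr 2 n)

lemma mem_S {σ : Equiv.Perm (Fin (2 * n))} :
    σ ∈ S n ↔ ∀ i : Fin n, σ (idx 2 n i 0) < σ (idx 2 n i 1) := by
  simp only [S, Finset.mem_filter, Finset.mem_univ, true_and]
  constructor
  · exact fun h i => h i 0 1 (by decide)
  · intro h i r r' hrr'
    obtain ⟨h0, h1⟩ := fin2_lt hrr'
    subst h0; subst h1; exact h i

variable (n) in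
/-- recovery of the set of swapped blocks -/
def recS (π : Equiv.Perm (Fin (2 * n))) : Finset (Fin n) :=
  Finset.univ.filter fun i => π (idx 2 n i 1) < π (idx 2 n i 0)

lemma recS_phi {σ : Equiv.Perm (Fin (2 * n))} (hσ : σ ∈ S n) (t : Finset (Fin n)) :
    recS n (σ * bs t) = t := by
  ext i
  simp only [recS, Finset.mem_filter, Finset.mem_univ, true_and, Equiv.Perm.mul_apply,
    bs_apply]
  by_cases h : i ∈ t
  · simpa [h, flip] using mem_S.mp hσ i
  · simp only [h, if_false]
    constructor
    · intro hc; exact absurd (mem_S.mp hσ i) (not_lt.mpr hc.le)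
    · exact fun hc => absurd hc (by simp)

lemma phi_mem (π : Equiv.Perm (Fin (2 * n))) : π * bs (recS n π) ∈ S n := by
  rw [mem_S]
  intro i
  simp only [Equiv.Perm.mul_apply, bs_apply]
  by_cases h : i ∈ recS n π
  · simp only [h, if_true]
    simpa [flip] using (Finset.mem_filter.mp h).2
  · simp only [h, if_false]
    have h' : ¬ π (idx 2 n i 1) < π (idx 2 n i 0) := by
      intro hc; exact h (Finset.mem_filter.mpr ⟨Finset.mem_univ _, hc⟩)
    exact lt_of_le_of_ne (not_lt.mp h') (π.injective.ne (idx_ne i))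

lemma phi_cancel (π : Equiv.Perm (Fin (2 * n))) (t : Finset (Fin n)) :
    π * bs t * bs t = π := by
  rw [mul_assoc, bs_involutive, mul_one]

/-- Sum over all permutations equals double sum over block-increasing × subsets. -/
lemma sum_decomp (F : Equiv.Perm (Fin (2 * n)) → ℚ) :
    ∑ p ∈ (S n) ×ˢ Finset.univ.powerset, F (p.1 * bs p.2) =
      ∑ π : Equiv.Perm (Fin (2 * n)), F π := by
  apply Finset.sum_nbij' (fun p => p.1 * bs p.2) (fun π => (π * bs (recS n π), recS n π))
  · exact fun p _ => Finset.mem_univ _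
  · intro π _
    exact Finset.mem_product.mpr ⟨phi_mem π, Finset.mem_powerset.mpr (Finset.subset_univ _)⟩
  · intro p hp
    have hp1 := (Finset.mem_product.mp hp).1
    show (p.1 * bs p.2 * bs (recS n (p.1 * bs p.2)), recS n (p.1 * bs p.2)) = p
    rw [recS_phi hp1, phi_cancel]
  · exact fun π _ => phi_cancel π _
  · exact fun p _ => rfl

lemma card_S : 2 ^ n * (S n).card = (2 * n).factorial := by
  have h := Finset.card_nbij' (s := (S n) ×ˢ (Finset.univ.powerset : Finset (Finset (Fin n))))
    (t := (Finset.univ : Finset (Equiv.Perm (Fin (2 * n)))))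
    (fun p => p.1 * bs p.2) (fun π => (π * bs (recS n π), recS n π))
    (fun p _ => Finset.mem_univ _)
    (fun π _ => Finset.mem_product.mpr ⟨phi_mem π, Finset.mem_powerset.mpr (Finset.subset_univ _)⟩)
    (fun p hp => by
      have hp1 := (Finset.mem_product.mp hp).1
      show (p.1 * bs p.2 * bs (recS n (p.1 * bs p.2)), recS n (p.1 * bs p.2)) = p
      rw [recS_phi hp1, phi_cancel])
    (fun π _ => phi_cancel π _)
  rw [Finset.card_product, Finset.card_powerset, Finset.card_univ, Fintype.card_fin,
    Finset.card_univ, Fintype.card_perm, Fintype.card_fin] at h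
  rw [mul_comm]; exact h

@[simp] lemma flip_zero : flip 0 = 1 := rfl
@[simp] lemma flip_one : flip 1 = 0 := rfl

variable (n) in
/-- `Fin n × Fin 2 ≃ Fin (2 * n)` via `idx`. -/
def E : Fin n × Fin 2 ≃ Fin (2 * n) where
  toFun p := idx 2 n p.1 p.2
  invFun x := (⟨x.val / 2, by omega⟩, ⟨x.val % 2, by omega⟩)
  left_inv p := by
    have h2 := p.2.isLt
    ext <;> simp only [idx] <;> omega
  right_inv x := by
    apply Fin.ext; simp only [idx]; omega

lemma prod_blocks (h : Fin (2 * n) → ℚ) :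
    ∏ x, h x = ∏ i : Fin n, (h (idx 2 n i 0) * h (idx 2 n i 1)) := by
  rw [← Equiv.prod_comp (E n) h, Fintype.prod_prod_type]
  exact Finset.prod_congr rfl fun i _ => by rw [Fin.prod_univ_two]; rfl

lemma sum_sign_prod (M : Matrix (Fin (2 * n)) (Fin (2 * n)) ℚ)
    (σ1 : Equiv.Perm (Fin (2 * n))) :
    ∑ π : Equiv.Perm (Fin (2 * n)),
        ((Equiv.Perm.sign π : ℤ) : ℚ) * ∏ x, M (σ1 x) (π x) =
      ((Equiv.Perm.sign σ1 : ℤ) : ℚ) * M.det := by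
  have hdet : ∑ τ : Equiv.Perm (Fin (2 * n)),
      ((Equiv.Perm.sign τ : ℤ) : ℚ) * ∏ x, M x (τ x) = M.det := by
    rw [← Matrix.det_transpose M, Matrix.det_apply']
    exact Finset.sum_congr rfl fun τ _ => by simp [Matrix.transpose_apply]
  rw [← Equiv.sum_comp (Equiv.mulRight σ1)
    (fun π => ((Equiv.Perm.sign π : ℤ) : ℚ) * ∏ x, M (σ1 x) (π x))]
  have key : ∀ τ : Equiv.Perm (Fin (2 * n)),
      ((Equiv.Perm.sign (Equiv.mulRight σ1 τ) : ℤ) : ℚ) *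
          ∏ x, M (σ1 x) ((Equiv.mulRight σ1 τ) x) =
        ((Equiv.Perm.sign σ1 : ℤ) : ℚ) *
          (((Equiv.Perm.sign τ : ℤ) : ℚ) * ∏ x, M x (τ x)) := by
    intro τ
    have h1 : Equiv.mulRight σ1 τ = τ * σ1 := rfl
    have h2 : ∏ x, M (σ1 x) ((τ * σ1) x) = ∏ x, M x (τ x) := by
      exact Equiv.prod_comp σ1 (fun y => M y (τ y))
    rw [h1, h2, Equiv.Perm.sign_mul]
    push_cast
    ring
  rw [Finset.sum_congr rfl (fun τ _ => key τ), ← Finset.mul_sum, hdet]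

lemma inner_sum (M : Matrix (Fin (2 * n)) (Fin (2 * n)) ℚ)
    (σ1 : Equiv.Perm (Fin (2 * n))) :
    ∑ σ2 ∈ S n, ((Equiv.Perm.sign σ2 : ℤ) : ℚ) *
        ∏ i : Fin n,
          (M (σ1 (idx 2 n i 0)) (σ2 (idx 2 n i 0)) * M (σ1 (idx 2 n i 1)) (σ2 (idx 2 n i 1)) -
            M (σ1 (idx 2 n i 0)) (σ2 (idx 2 n i 1)) * M (σ1 (idx 2 n i 1)) (σ2 (idx 2 n i 0))) =
      ((Equiv.Perm.sign σ1 : ℤ) : ℚ) * M.det := by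
  rw [← sum_sign_prod M σ1, ← sum_decomp, Finset.sum_product]
  apply Finset.sum_congr rfl
  intro σ2 _
  set c : Fin n → ℚ := fun i =>
    M (σ1 (idx 2 n i 0)) (σ2 (idx 2 n i 1)) * M (σ1 (idx 2 n i 1)) (σ2 (idx 2 n i 0)) with hc
  set d : Fin n → ℚ := fun i =>
    M (σ1 (idx 2 n i 0)) (σ2 (idx 2 n i 0)) * M (σ1 (idx 2 n i 1)) (σ2 (idx 2 n i 1)) with hd
  have expand : ∏ i : Fin n,
      (M (σ1 (idx 2 n i 0)) (σ2 (idx 2 n i 0)) * M (σ1 (idx 2 n i 1)) (σ2 (idx 2 n i 1)) -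
        M (σ1 (idx 2 n i 0)) (σ2 (idx 2 n i 1)) * M (σ1 (idx 2 n i 1)) (σ2 (idx 2 n i 0))) =
      ∑ t ∈ Finset.univ.powerset,
        (∏ i ∈ t, -(c i)) * ∏ i ∈ Finset.univ \ t, d i := by
    rw [← Finset.prod_add]
    exact Finset.prod_congr rfl fun i _ => by simp [hc, hd]; ring
  rw [expand, Finset.mul_sum]
  apply Finset.sum_congr rfl
  intro t _
  have hprod : ∏ x, M (σ1 x) ((σ2 * bs t) x) =
      (∏ i ∈ t, c i) * ∏ i ∈ Finset.univ \ t, d i := by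
    rw [prod_blocks]
    have hF : ∀ i : Fin n,
        M (σ1 (idx 2 n i 0)) ((σ2 * bs t) (idx 2 n i 0)) *
            M (σ1 (idx 2 n i 1)) ((σ2 * bs t) (idx 2 n i 1)) =
          if i ∈ t then c i else d i := by
      intro i
      by_cases h : i ∈ t <;>
        simp [Equiv.Perm.mul_apply, bs_apply, h, hc, hd, mul_comm]
    rw [Finset.prod_congr rfl fun i _ => hF i, ← Finset.prod_sdiff (Finset.subset_univ t),
      mul_comm]
    congr 1
    · exact Finset.prod_congr rfl fun i hi => by rw [if_pos hi]
    · exact Finset.prod_congr rfl fun i hi => by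
        rw [if_neg (Finset.mem_sdiff.mp hi).2]
  have hneg : (∏ i ∈ t, -(c i)) = (-1 : ℚ) ^ t.card * ∏ i ∈ t, c i := by
    rw [← Finset.prod_const, ← Finset.prod_mul_distrib]
    simp
  have hsign : ((Equiv.Perm.sign (σ2 * bs t) : ℤ) : ℚ) =
      ((Equiv.Perm.sign σ2 : ℤ) : ℚ) * (-1) ^ t.card := by
    rw [Equiv.Perm.sign_mul, bs_sign]
    push_cast
    ring
  rw [hprod, hneg, hsign]
  ring

end PfAux

/-- Composition formula, simplest instance (`m = 2`, `m' = 1`, `p = 2`, `k = 2`): for a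
`2n × 2n` matrix `M`, the `Pf_2` of the 4-index tensor of `2×2` minors of `M` equals
`(multinomial(2n; 2,…,2)/n!) · det M = ((2n)!/(2^n · n!)) · det M`. -/
theorem pf_two_of_minor_tensor (n : ℕ) (M : Matrix (Fin (2 * n)) (Fin (2 * n)) ℚ) :
    Pf 2 2 n (fun f =>
        M (f 0 0) (f 1 0) * M (f 0 1) (f 1 1) - M (f 0 0) (f 1 1) * M (f 0 1) (f 1 0)) =
      (((2 * n).factorial : ℚ) / (2 ^ n * n.factorial)) * M.det := by
  classical
  unfold Pf
  have hstep1 :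
      (∑ σ ∈ Finset.univ.filter (fun σ : Fin 2 → Equiv.Perm (Fin (2 * n)) =>
          ∀ j, BlockIncr 2 n (σ j)),
        (∏ j, ((Equiv.Perm.sign (σ j) : ℤ) : ℚ)) *
          ∏ i : Fin n,
            (M (σ 0 (idx 2 n i 0)) (σ 1 (idx 2 n i 0)) *
                M (σ 0 (idx 2 n i 1)) (σ 1 (idx 2 n i 1)) -
              M (σ 0 (idx 2 n i 0)) (σ 1 (idx 2 n i 1)) *
                M (σ 0 (idx 2 n i 1)) (σ 1 (idx 2 n i 0)))) =
      ∑ p ∈ (PfAux.S n) ×ˢ (PfAux.S n),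
        (((Equiv.Perm.sign p.1 : ℤ) : ℚ) * ((Equiv.Perm.sign p.2 : ℤ) : ℚ)) *
          ∏ i : Fin n,
            (M (p.1 (idx 2 n i 0)) (p.2 (idx 2 n i 0)) *
                M (p.1 (idx 2 n i 1)) (p.2 (idx 2 n i 1)) -
              M (p.1 (idx 2 n i 0)) (p.2 (idx 2 n i 1)) *
                M (p.1 (idx 2 n i 1)) (p.2 (idx 2 n i 0))) := by
    apply Finset.sum_nbij' (fun σ => (σ 0, σ 1)) (fun p j => if j = 0 then p.1 else p.2)
    · intro σ hσ
      have h := Finset.mem_filter.mp hσ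
      exact Finset.mem_product.mpr ⟨by simpa [PfAux.S] using h.2 0, by simpa [PfAux.S] using h.2 1⟩
    · intro p hp
      obtain ⟨h1, h2⟩ := Finset.mem_product.mp hp
      refine Finset.mem_filter.mpr ⟨Finset.mem_univ _, ?_⟩
      intro j
      fin_cases j
      · simpa [PfAux.S] using h1
      · simpa [PfAux.S] using h2
    · intro σ _
      funext j
      fin_cases j <;> simp
    · intro p _
      simp
    · intro σ _
      simp [Fin.prod_univ_two]
  rw [hstep1, Finset.sum_product]
  have hstep2 : ∀ σ1 ∈ PfAux.S n,
      (∑ σ2 ∈ PfAux.S n,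
        (((Equiv.Perm.sign σ1 : ℤ) : ℚ) * ((Equiv.Perm.sign σ2 : ℤ) : ℚ)) *
          ∏ i : Fin n,
            (M (σ1 (idx 2 n i 0)) (σ2 (idx 2 n i 0)) *
                M (σ1 (idx 2 n i 1)) (σ2 (idx 2 n i 1)) -
              M (σ1 (idx 2 n i 0)) (σ2 (idx 2 n i 1)) *
                M (σ1 (idx 2 n i 1)) (σ2 (idx 2 n i 0)))) = M.det := by
    intro σ1 _
    have hsq : ((Equiv.Perm.sign σ1 : ℤ) : ℚ) * ((Equiv.Perm.sign σ1 : ℤ) : ℚ) = 1 := by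
      rw [← Int.cast_mul, ← Units.val_mul, Int.units_mul_self]
      norm_num
    have hfac : (∑ σ2 ∈ PfAux.S n,
        (((Equiv.Perm.sign σ1 : ℤ) : ℚ) * ((Equiv.Perm.sign σ2 : ℤ) : ℚ)) *
          ∏ i : Fin n,
            (M (σ1 (idx 2 n i 0)) (σ2 (idx 2 n i 0)) *
                M (σ1 (idx 2 n i 1)) (σ2 (idx 2 n i 1)) -
              M (σ1 (idx 2 n i 0)) (σ2 (idx 2 n i 1)) *
                M (σ1 (idx 2 n i 1)) (σ2 (idx 2 n i 0)))) =
        ((Equiv.Perm.sign σ1 : ℤ) : ℚ) * ∑ σ2 ∈ PfAux.S n,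
            ((Equiv.Perm.sign σ2 : ℤ) : ℚ) *
              ∏ i : Fin n,
                (M (σ1 (idx 2 n i 0)) (σ2 (idx 2 n i 0)) *
                    M (σ1 (idx 2 n i 1)) (σ2 (idx 2 n i 1)) -
                  M (σ1 (idx 2 n i 0)) (σ2 (idx 2 n i 1)) *
                    M (σ1 (idx 2 n i 1)) (σ2 (idx 2 n i 0))) := by
      rw [Finset.mul_sum]
      exact Finset.sum_congr rfl fun σ2 _ => by ring
    rw [hfac, PfAux.inner_sum, ← mul_assoc, hsq, one_mul]
  rw [Finset.sum_congr rfl hstep2, Finset.sum_const, nsmul_eq_mul]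
  have hcard : ((PfAux.S n).card : ℚ) * 2 ^ n = ((2 * n).factorial : ℚ) := by
    have := PfAux.card_S (n := n)
    push_cast [← this]
    ring
  have h2 : (2 : ℚ) ^ n ≠ 0 := by positivity
  have hn : (n.factorial : ℚ) ≠ 0 := by
    exact_mod_cast n.factorial_ne_zero
  field_simp
  rw [← hcard]
  ring
end
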